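/- arXiv:2602.16155 — 8 statements merged into one kernel-verified Lean document; each statement's English description precedes it below -/
import Mathlib

section
/- Partial generalized smoothness in x (Lemma 1, first part): Assume additionally that the derivative of ψ* is nonnegative everywhere. Then for all x, x' ∈ ℝ^d and all η ∈ ℝ, ‖∇_x L(x,η) − ∇_x L(x',η)‖ ≤ (L₀ + L₁ |∂_η L(x,η)|) ‖x − x'‖, where L₀ = L + G²M/λ and L₁ = L/G. -/
set_option maxHeartbeats 1000000

open InnerProductSpace Finset

private lemma fd_formula' {d n : ℕ} (G lam η : ℝ) (hlam : lam ≠ 0)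
    (ℓ : Fin n → EuclideanSpace ℝ (Fin d) → ℝ)
    (hdiff : ∀ i, Differentiable ℝ (ℓ i))
    (ψs : ℝ → ℝ) (hψdiff : Differentiable ℝ ψs)
    (y : EuclideanSpace ℝ (Fin d)) :
    HasFDerivAt (fun z => (1 / (n : ℝ)) * ∑ i, (lam * ψs ((ℓ i z - G * η) / lam) + G * η))
      ((1 / (n : ℝ)) • ∑ i, deriv ψs ((ℓ i y - G * η) / lam) • fderiv ℝ (ℓ i) y) y := by
  have h : ∀ i : Fin n, HasFDerivAt (fun z => lam * ψs ((ℓ i z - G * η) / lam) + G * η)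
      (deriv ψs ((ℓ i y - G * η) / lam) • fderiv ℝ (ℓ i) y) y := by
    intro i
    have h1 : HasFDerivAt (fun z => (ℓ i z - G * η) / lam) (lam⁻¹ • fderiv ℝ (ℓ i) y) y := by
      simp_rw [div_eq_inv_mul]
      exact ((hdiff i y).hasFDerivAt.sub_const (G * η)).const_mul lam⁻¹
    have h2 := (hψdiff ((ℓ i y - G * η) / lam)).hasDerivAt.comp_hasFDerivAt y h1
    have h3 := (h2.const_mul lam).add_const (G * η)
    have e : deriv ψs ((ℓ i y - G * η) / lam) • fderiv ℝ (ℓ i) y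
        = lam • deriv ψs ((ℓ i y - G * η) / lam) • lam⁻¹ • fderiv ℝ (ℓ i) y := by
      rw [smul_smul, smul_smul, mul_comm lam, mul_assoc, mul_inv_cancel₀ hlam, mul_one]
    rw [e]; exact h3
  exact (HasFDerivAt.fun_sum (fun i _ => h i)).const_mul _

private lemma dt_formula {d n : ℕ} (G lam η : ℝ) (hlam : lam ≠ 0)
    (ℓ : Fin n → EuclideanSpace ℝ (Fin d) → ℝ)
    (ψs : ℝ → ℝ) (hψdiff : Differentiable ℝ ψs)
    (x : EuclideanSpace ℝ (Fin d)) :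
    HasDerivAt (fun t => (1 / (n : ℝ)) * ∑ i, (lam * ψs ((ℓ i x - G * t) / lam) + G * t))
      ((1 / (n : ℝ)) * ∑ i, (G - G * deriv ψs ((ℓ i x - G * η) / lam))) η := by
  have h : ∀ i : Fin n, HasDerivAt (fun t => lam * ψs ((ℓ i x - G * t) / lam) + G * t)
      (G - G * deriv ψs ((ℓ i x - G * η) / lam)) η := by
    intro i
    have h1 : HasDerivAt (fun t : ℝ => (ℓ i x - G * t) / lam) (-G / lam) η := by
      simpa using (((hasDerivAt_id η).const_mul G).const_sub (ℓ i x)).div_const lam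
    have h2 := ((hψdiff ((ℓ i x - G * η) / lam)).hasDerivAt.comp η h1)
    have h3 := (h2.const_mul lam).add ((hasDerivAt_id η).const_mul G)
    have e : G - G * deriv ψs ((ℓ i x - G * η) / lam)
        = lam * (deriv ψs ((ℓ i x - G * η) / lam) * (-G / lam)) + G * 1 := by
      have hc : lam * (-G / lam) = -G := by field_simp
      linear_combination (-(deriv ψs ((ℓ i x - G * η) / lam))) * hc
    rw [e]; exact h3
  exact (HasDerivAt.fun_sum (fun i _ => h i)).const_mul _

/-- Partial generalized smoothness in `x` (Lemma 1, first part): for the empirical dual DRO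
objective `L(x,η) = (1/n) ∑ᵢ (λ ψ*((ℓ(x;ξᵢ) − Gη)/λ) + Gη)`, assuming the derivative of `ψ*`
is nonnegative, we have
`‖∇ₓL(x,η) − ∇ₓL(x',η)‖ ≤ (L₀ + L₁ |∂_η L(x,η)|) ‖x − x'‖` with
`L₀ = L + G²M/λ` and `L₁ = L/G`. -/
theorem stmt0
    {d n : ℕ} (hn : 0 < n)
    (G L M lam : ℝ) (hG : 0 < G) (hL : 0 < L) (hM : 0 < M) (hlam : 0 < lam)
    (ℓ : Fin n → EuclideanSpace ℝ (Fin d) → ℝ)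
    (hdiff : ∀ i, Differentiable ℝ (ℓ i))
    (hlip : ∀ i x y, |ℓ i x - ℓ i y| ≤ G * ‖x - y‖)
    (hsmooth : ∀ i x y, ‖gradient (ℓ i) x - gradient (ℓ i) y‖ ≤ L * ‖x - y‖)
    (ψs : ℝ → ℝ) (hψdiff : Differentiable ℝ ψs)
    (hψlip : ∀ a b, |deriv ψs a - deriv ψs b| ≤ M * |a - b|)
    (hψpos : ∀ a, 0 ≤ deriv ψs a) :
    ∀ (x x' : EuclideanSpace ℝ (Fin d)) (η : ℝ),
      ‖gradient (fun y => (1 / (n : ℝ)) * ∑ i, (lam * ψs ((ℓ i y - G * η) / lam) + G * η)) x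
        - gradient (fun y => (1 / (n : ℝ)) * ∑ i, (lam * ψs ((ℓ i y - G * η) / lam) + G * η)) x'‖
      ≤ ((L + G ^ 2 * M / lam)
            + (L / G) *
              |deriv (fun t => (1 / (n : ℝ)) * ∑ i, (lam * ψs ((ℓ i x - G * t) / lam) + G * t)) η|)
          * ‖x - x'‖ := by
  intro x x' η
  have hn' : (n : ℝ) ≠ 0 := Nat.cast_ne_zero.2 hn.ne'
  have hlam' : lam ≠ 0 := hlam.ne'
  set c : Fin n → ℝ := fun i => deriv ψs ((ℓ i x - G * η) / lam) with hc
  set c' : Fin n → ℝ := fun i => deriv ψs ((ℓ i x' - G * η) / lam) with hc'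
  set s : ℝ := (1 / (n : ℝ)) * ∑ i, c i with hs
  -- smoothness of ℓ in fderiv form
  have hsm : ∀ i : Fin n, ‖fderiv ℝ (ℓ i) x - fderiv ℝ (ℓ i) x'‖ ≤ L * ‖x - x'‖ := by
    intro i
    have := hsmooth i x x'
    rwa [gradient, gradient, ← map_sub, LinearIsometryEquiv.norm_map] at this
  -- Lipschitz bound on fderiv
  have hDle : ∀ i : Fin n, ‖fderiv ℝ (ℓ i) x'‖ ≤ G := by
    intro i
    have hlw : LipschitzWith ⟨G, hG.le⟩ (ℓ i) := by
      apply LipschitzWith.of_dist_le_mul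
      intro a b
      rw [Real.dist_eq, dist_eq_norm]; exact hlip i a b
    exact norm_fderiv_le_of_lipschitz ℝ hlw
  -- the gradient difference norm
  have hfx := fd_formula' G lam η hlam' ℓ hdiff ψs hψdiff x
  have hfx' := fd_formula' G lam η hlam' ℓ hdiff ψs hψdiff x'
  have hnorm : ‖gradient (fun y => (1 / (n : ℝ)) * ∑ i, (lam * ψs ((ℓ i y - G * η) / lam) + G * η)) x
        - gradient (fun y => (1 / (n : ℝ)) * ∑ i, (lam * ψs ((ℓ i y - G * η) / lam) + G * η)) x'‖
      = ‖((1 / (n : ℝ)) • ∑ i, c i • fderiv ℝ (ℓ i) x)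
          - ((1 / (n : ℝ)) • ∑ i, c' i • fderiv ℝ (ℓ i) x')‖ := by
    rw [gradient, gradient, ← map_sub, LinearIsometryEquiv.norm_map, hfx.fderiv, hfx'.fderiv]
  -- per-term bound
  have hterm : ∀ i : Fin n, ‖c i • fderiv ℝ (ℓ i) x - c' i • fderiv ℝ (ℓ i) x'‖
      ≤ (c i * L + G ^ 2 * M / lam) * ‖x - x'‖ := by
    intro i
    have hsplit : c i • fderiv ℝ (ℓ i) x - c' i • fderiv ℝ (ℓ i) x'
        = c i • (fderiv ℝ (ℓ i) x - fderiv ℝ (ℓ i) x') + (c i - c' i) • fderiv ℝ (ℓ i) x' := by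
      rw [smul_sub, sub_smul]; abel
    rw [hsplit]
    have h1 : ‖c i • (fderiv ℝ (ℓ i) x - fderiv ℝ (ℓ i) x')‖ ≤ c i * (L * ‖x - x'‖) := by
      rw [norm_smul, Real.norm_eq_abs, abs_of_nonneg (hψpos _)]
      exact mul_le_mul_of_nonneg_left (hsm i) (hψpos _)
    have hcc : |c i - c' i| ≤ M * (G * ‖x - x'‖) / lam := by
      have := hψlip ((ℓ i x - G * η) / lam) ((ℓ i x' - G * η) / lam)
      have heq : (ℓ i x - G * η) / lam - (ℓ i x' - G * η) / lam = (ℓ i x - ℓ i x') / lam := by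
        ring
      rw [heq, abs_div, abs_of_pos hlam] at this
      refine this.trans ?_
      rw [mul_div_assoc]
      gcongr
      exact hlip i x x'
    have h2 : ‖(c i - c' i) • fderiv ℝ (ℓ i) x'‖ ≤ (M * (G * ‖x - x'‖) / lam) * G := by
      rw [norm_smul, Real.norm_eq_abs]
      have := abs_nonneg (c i - c' i)
      exact mul_le_mul hcc (hDle i) (norm_nonneg _) (by positivity)
    calc ‖c i • (fderiv ℝ (ℓ i) x - fderiv ℝ (ℓ i) x') + (c i - c' i) • fderiv ℝ (ℓ i) x'‖
        ≤ c i * (L * ‖x - x'‖) + (M * (G * ‖x - x'‖) / lam) * G :=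
          (norm_add_le _ _).trans (add_le_add h1 h2)
      _ = (c i * L + G ^ 2 * M / lam) * ‖x - x'‖ := by ring
  -- sum bound
  have hsum : ‖((1 / (n : ℝ)) • ∑ i, c i • fderiv ℝ (ℓ i) x)
          - ((1 / (n : ℝ)) • ∑ i, c' i • fderiv ℝ (ℓ i) x')‖
      ≤ (L * s + G ^ 2 * M / lam) * ‖x - x'‖ := by
    rw [← smul_sub, ← Finset.sum_sub_distrib, norm_smul, Real.norm_eq_abs,
      abs_of_nonneg (by positivity : (0:ℝ) ≤ 1 / (n:ℝ))]
    calc (1 / (n : ℝ)) * ‖∑ i, (c i • fderiv ℝ (ℓ i) x - c' i • fderiv ℝ (ℓ i) x')‖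
        ≤ (1 / (n : ℝ)) * ∑ i, ((c i * L + G ^ 2 * M / lam) * ‖x - x'‖) := by
          apply mul_le_mul_of_nonneg_left _ (by positivity)
          exact (norm_sum_le _ _).trans (Finset.sum_le_sum fun i _ => hterm i)
      _ = ((1 / (n : ℝ)) * ∑ i, (c i * L + G ^ 2 * M / lam)) * ‖x - x'‖ := by
          rw [← Finset.sum_mul, ← mul_assoc]
      _ = (L * s + G ^ 2 * M / lam) * ‖x - x'‖ := by
          congr 1
          rw [hs, Finset.sum_add_distrib, Finset.sum_const, Finset.card_univ, Fintype.card_fin,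
            nsmul_eq_mul, ← Finset.sum_mul]
          field_simp
  -- the η-derivative
  have hd := dt_formula G lam η hlam' ℓ ψs hψdiff x
  have hdval : deriv (fun t => (1 / (n : ℝ)) * ∑ i, (lam * ψs ((ℓ i x - G * t) / lam) + G * t)) η
      = G * (1 - s) := by
    rw [hd.deriv, hs]
    simp only [Finset.sum_sub_distrib, Finset.sum_const, Finset.card_univ, Fintype.card_fin,
      nsmul_eq_mul, ← Finset.mul_sum]
    field_simp
    ring
  -- finish
  rw [hnorm, hdval]
  refine hsum.trans (mul_le_mul_of_nonneg_right ?_ (norm_nonneg _))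
  have hs0 : 0 ≤ s := by
    rw [hs]
    have : 0 ≤ ∑ i, c i := Finset.sum_nonneg fun i _ => hψpos _
    positivity
  have hLG : (L / G) * |G * (1 - s)| = L * |1 - s| := by
    rw [abs_mul, abs_of_pos hG]
    field_simp
  rw [hLG]
  have hle : s ≤ 1 + |1 - s| := by
    rcases abs_cases (1 - s) with ⟨h, _⟩ | ⟨h, _⟩ <;> linarith
  have h2 := mul_le_mul_of_nonneg_left hle hL.le
  rw [mul_add, mul_one] at h2
  linarith
end

section
/- Bounded variance of the η-gradient (Lemma 2, η part): Fix x ∈ ℝ^d and η ∈ ℝ, and suppose the empirical variance of the loss values is bounded: (1/n) Σᵢ (ℓ(x;ξᵢ) − ℓ̄(x))² ≤ σ², where ℓ̄(x) = (1/n) Σⱼ ℓ(x;ξⱼ). Then (1/n) Σᵢ (∂_η L(x,η;ξᵢ) − ∂_η L(x,η))² ≤ G²M²σ²/λ². -/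
private lemma hd_aux {G lam : ℝ} (hlam : lam ≠ 0) (ψs : ℝ → ℝ) (hψdiff : Differentiable ℝ ψs)
    (c η : ℝ) :
    HasDerivAt (fun t => lam * ψs ((c - G * t) / lam) + G * t)
      (-G * deriv ψs ((c - G * η) / lam) + G) η := by
  have h1 : HasDerivAt (fun t : ℝ => (c - G * t) / lam) (-G / lam) η := by
    have : HasDerivAt (fun t : ℝ => (c - G * t)) (-G) η := by
      simpa using ((hasDerivAt_const η c).fun_sub ((hasDerivAt_id η).const_mul G))
    simpa using this.div_const lam
  have h2 : HasDerivAt (fun t : ℝ => ψs ((c - G * t) / lam))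
      (deriv ψs ((c - G * η) / lam) * (-G / lam)) η :=
    (hψdiff ((c - G * η) / lam)).hasDerivAt.comp η h1
  have h3 := (h2.const_mul lam).fun_add ((hasDerivAt_id η).const_mul G)
  refine h3.congr_deriv ?_
  field_simp



/-- Bounded variance of the `η`-gradient (Lemma 2, `η` part): if the empirical variance of the
loss values at `x` is at most `σ²`, then the empirical variance of the per-sample `η`-partial
derivatives of the dual DRO objective is at most `G²M²σ²/λ²`. -/
theorem stmt5
    {d n : ℕ} (hn : 0 < n)
    (G L M lam σ : ℝ) (hG : 0 < G) (hL : 0 < L) (hM : 0 < M) (hlam : 0 < lam) (hσ : 0 < σ)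
    (ℓ : Fin n → EuclideanSpace ℝ (Fin d) → ℝ)
    (hdiff : ∀ i, Differentiable ℝ (ℓ i))
    (hlip : ∀ i x y, |ℓ i x - ℓ i y| ≤ G * ‖x - y‖)
    (hsmooth : ∀ i x y, ‖gradient (ℓ i) x - gradient (ℓ i) y‖ ≤ L * ‖x - y‖)
    (ψs : ℝ → ℝ) (hψdiff : Differentiable ℝ ψs)
    (hψlip : ∀ a b, |deriv ψs a - deriv ψs b| ≤ M * |a - b|)
    (x : EuclideanSpace ℝ (Fin d)) (η : ℝ)
    (hvar : (1 / (n : ℝ)) * ∑ i, (ℓ i x - (1 / (n : ℝ)) * ∑ j, ℓ j x) ^ 2 ≤ σ ^ 2) :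
    (1 / (n : ℝ)) * ∑ i,
        (deriv (fun t => lam * ψs ((ℓ i x - G * t) / lam) + G * t) η
          - deriv (fun t => (1 / (n : ℝ)) * ∑ j, (lam * ψs ((ℓ j x - G * t) / lam) + G * t)) η) ^ 2
      ≤ G ^ 2 * M ^ 2 * σ ^ 2 / lam ^ 2 := by
  have hn' : (0:ℝ) < n := by exact_mod_cast hn
  set a : Fin n → ℝ := fun i => deriv ψs ((ℓ i x - G * η) / lam) with ha
  set b : ℝ := (1 / (n : ℝ)) * ∑ j, a j with hb
  set lbar : ℝ := (1 / (n : ℝ)) * ∑ j, ℓ j x with hlbar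
  set c : ℝ := deriv ψs ((lbar - G * η) / lam) with hc
  -- derivative of each per-sample term
  have hderiv1 : ∀ i : Fin n,
      deriv (fun t => lam * ψs ((ℓ i x - G * t) / lam) + G * t) η = -G * a i + G := by
    intro i
    exact (hd_aux hlam.ne' ψs hψdiff (ℓ i x) η).deriv
  -- derivative of average
  have hderiv2 :
      deriv (fun t => (1 / (n : ℝ)) * ∑ j, (lam * ψs ((ℓ j x - G * t) / lam) + G * t)) η
        = -G * b + G := by
    have hsum : HasDerivAt (fun t => ∑ j, (lam * ψs ((ℓ j x - G * t) / lam) + G * t))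
        (∑ j : Fin n, (-G * a j + G)) η := by
      exact HasDerivAt.fun_sum fun j _ => hd_aux hlam.ne' ψs hψdiff (ℓ j x) η
    have h := (hsum.const_mul (1 / (n : ℝ))).deriv
    rw [h]
    rw [Finset.sum_add_distrib, Finset.sum_const]
    simp only [Finset.card_univ, Fintype.card_fin, nsmul_eq_mul]
    rw [← Finset.mul_sum]
    field_simp [hb]
    rw [hb]; field_simp
  simp only [hderiv1, hderiv2]
  have hstep : ∀ i : Fin n, (-G * a i + G - (-G * b + G))^2 = G^2 * (a i - b)^2 := by
    intro i; ring
  simp only [hstep]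
  -- variance of a around its mean ≤ around c
  have hvarc : ∑ i, (a i - b)^2 ≤ ∑ i, (a i - c)^2 := by
    have hkey : ∑ i, (a i - c)^2 - ∑ i, (a i - b)^2 = (n : ℝ) * (b - c)^2 := by
      have hsa : ∑ i, a i = (n : ℝ) * b := by
        rw [hb]; field_simp
      have : ∑ i, ((a i - c)^2 - (a i - b)^2) = ∑ i, (2 * a i * (b - c) + (c^2 - b^2)) := by
        apply Finset.sum_congr rfl; intro i _; ring
      rw [← Finset.sum_sub_distrib, this, Finset.sum_add_distrib, Finset.sum_const]
      simp only [Finset.card_univ, Fintype.card_fin, nsmul_eq_mul]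
      rw [show ∑ i : Fin n, 2 * a i * (b - c) = 2 * (b - c) * ∑ i, a i by
        rw [Finset.mul_sum]; apply Finset.sum_congr rfl; intro i _; ring]
      rw [hsa]; ring
    nlinarith [sq_nonneg (b - c)]
  -- pointwise bound (a i - c)^2 ≤ (M/lam)^2 (ℓ i x - lbar)^2
  have hpt : ∀ i : Fin n, (a i - c)^2 ≤ M^2 / lam^2 * (ℓ i x - lbar)^2 := by
    intro i
    have h := hψlip ((ℓ i x - G * η) / lam) ((lbar - G * η) / lam)
    have habs : |a i - c| ≤ M / lam * |ℓ i x - lbar| := by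
      have heq : (ℓ i x - G * η) / lam - (lbar - G * η) / lam = (ℓ i x - lbar) / lam := by ring
      rw [heq] at h
      rw [abs_div, abs_of_pos hlam] at h
      calc |a i - c| ≤ M * (|ℓ i x - lbar| / lam) := h
        _ = M / lam * |ℓ i x - lbar| := by ring
    calc (a i - c)^2 ≤ (M / lam * |ℓ i x - lbar|)^2 := by
          have := abs_nonneg (a i - c)
          nlinarith [abs_nonneg (a i - c), sq_abs (a i - c), sq_abs (ℓ i x - lbar)]
      _ = M^2 / lam^2 * (ℓ i x - lbar)^2 := by rw [mul_pow, div_pow, sq_abs]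
  calc (1 / (n : ℝ)) * ∑ i, G^2 * (a i - b)^2
      = G^2 * ((1 / (n : ℝ)) * ∑ i, (a i - b)^2) := by rw [← Finset.mul_sum]; ring
    _ ≤ G^2 * ((1 / (n : ℝ)) * ∑ i, (a i - c)^2) := by
        apply mul_le_mul_of_nonneg_left _ (sq_nonneg G)
        apply mul_le_mul_of_nonneg_left hvarc (by positivity)
    _ ≤ G^2 * ((1 / (n : ℝ)) * ∑ i, M^2 / lam^2 * (ℓ i x - lbar)^2) := by
        apply mul_le_mul_of_nonneg_left _ (sq_nonneg G)
        apply mul_le_mul_of_nonneg_left _ (by positivity)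
        exact Finset.sum_le_sum fun i _ => hpt i
    _ = G^2 * M^2 / lam^2 * ((1 / (n : ℝ)) * ∑ i, (ℓ i x - lbar)^2) := by
        rw [← Finset.mul_sum]; ring
    _ ≤ G^2 * M^2 / lam^2 * σ^2 := by
        apply mul_le_mul_of_nonneg_left hvar (by positivity)
    _ = G^2 * M^2 * σ^2 / lam^2 := by ring
end

section
/- Partially affine variance of the x-gradient (Lemma 2, x part): Assume additionally that the derivative of ψ* is nonnegative everywhere. Fix x ∈ ℝ^d and η ∈ ℝ, and suppose (1/n) Σᵢ (ℓ(x;ξᵢ) − ℓ̄(x))² ≤ σ², where ℓ̄(x) = (1/n) Σⱼ ℓ(x;ξⱼ). Then (1/n) Σᵢ ‖∇_x L(x,η;ξᵢ) − ∇_x L(x,η)‖² ≤ D₀ + D₁ (∂_η L(x,η))², where D₀ = 16G² + 2G²M²σ²/λ² and D₁ = 16. -/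
open InnerProductSpace Finset

lemma aux_grad {d : ℕ} (lam c : ℝ) (hlam : lam ≠ 0) (f : EuclideanSpace ℝ (Fin d) → ℝ)
    (hf : Differentiable ℝ f) (ψs : ℝ → ℝ) (hψ : Differentiable ℝ ψs)
    (x : EuclideanSpace ℝ (Fin d)) :
    HasGradientAt (fun y => lam * ψs ((f y - c) / lam) + c)
      (deriv ψs ((f x - c) / lam) • gradient f x) x := by
  rw [hasGradientAt_iff_hasFDerivAt]
  have h1 : HasFDerivAt f (fderiv ℝ f x) x := (hf x).hasFDerivAt
  have hinner : HasDerivAt (fun t : ℝ => (t - c) / lam) (1 / lam) (f x) := by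
    simpa using ((hasDerivAt_id (f x)).sub_const c).div_const lam
  have h2 : HasDerivAt (fun t : ℝ => lam * ψs ((t - c) / lam) + c)
      (deriv ψs ((f x - c) / lam)) (f x) := by
    have := (((hψ _).hasDerivAt.comp (f x) hinner).const_mul lam).add_const c
    convert this using 1
    any_goals rfl
    field_simp
  have he : (toDual ℝ (EuclideanSpace ℝ (Fin d))) (deriv ψs ((f x - c) / lam) • gradient f x)
      = deriv ψs ((f x - c) / lam) • fderiv ℝ f x := by
    rw [map_smul, gradient, LinearIsometryEquiv.apply_symm_apply]
  rw [he]
  exact h2.comp_hasFDerivAt x h1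

lemma aux_norm_grad {d : ℕ} (G : ℝ) (hG : 0 ≤ G) (f : EuclideanSpace ℝ (Fin d) → ℝ)
    (hlip : ∀ x y, |f x - f y| ≤ G * ‖x - y‖) (x : EuclideanSpace ℝ (Fin d)) :
    ‖gradient f x‖ ≤ G := by
  rw [gradient, LinearIsometryEquiv.norm_map]
  exact norm_fderiv_le_of_lip' ℝ hG
    (Filter.Eventually.of_forall fun y => by simpa [Real.norm_eq_abs] using hlip y x)

lemma aux_var_min {n : ℕ} (hn : 0 < n) (f : Fin n → ℝ) (q : ℝ) :
    ∑ i, (f i - (1 / (n : ℝ)) * ∑ j, f j) ^ 2 ≤ ∑ i, (f i - q) ^ 2 := by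
  have hn' : (0 : ℝ) < n := by exact_mod_cast hn
  have hexp : ∀ c : ℝ, ∑ i, (f i - c) ^ 2
      = ∑ i, (f i) ^ 2 - 2 * c * ∑ i, f i + n * c ^ 2 := by
    intro c
    rw [Finset.sum_congr rfl (fun i _ => by ring :
      ∀ i ∈ Finset.univ, (f i - c) ^ 2 = (f i) ^ 2 - 2 * c * f i + c ^ 2)]
    simp [Finset.sum_add_distrib, Finset.sum_sub_distrib, Finset.mul_sum, Finset.card_univ]
  rw [hexp, hexp]
  set S := ∑ j, f j
  have key : (0:ℝ) ≤ ((n:ℝ) * q - S) ^ 2 := sq_nonneg _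
  have h1 : (1 / (n:ℝ)) * S * ((n:ℝ)) = S := by field_simp
  nlinarith [sq_nonneg ((n:ℝ) * q - S), hn']
open InnerProductSpace Finset
set_option maxHeartbeats 1000000 in
/-- Partially affine variance of the `x`-gradient (Lemma 2, `x` part): assuming the derivative
of `ψ*` is nonnegative and the empirical variance of the loss values at `x` is at most `σ²`,
the empirical variance of the per-sample `x`-gradients of the dual DRO objective is at most
`D₀ + D₁ (∂_η L(x,η))²` with `D₀ = 16G² + 2G²M²σ²/λ²` and `D₁ = 16`. -/
theorem stmt6
    {d n : ℕ} (hn : 0 < n)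
    (G L M lam σ : ℝ) (hG : 0 < G) (hL : 0 < L) (hM : 0 < M) (hlam : 0 < lam) (hσ : 0 < σ)
    (ℓ : Fin n → EuclideanSpace ℝ (Fin d) → ℝ)
    (hdiff : ∀ i, Differentiable ℝ (ℓ i))
    (hlip : ∀ i x y, |ℓ i x - ℓ i y| ≤ G * ‖x - y‖)
    (hsmooth : ∀ i x y, ‖gradient (ℓ i) x - gradient (ℓ i) y‖ ≤ L * ‖x - y‖)
    (ψs : ℝ → ℝ) (hψdiff : Differentiable ℝ ψs)
    (hψlip : ∀ a b, |deriv ψs a - deriv ψs b| ≤ M * |a - b|)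
    (hψpos : ∀ a, 0 ≤ deriv ψs a)
    (x : EuclideanSpace ℝ (Fin d)) (η : ℝ)
    (hvar : (1 / (n : ℝ)) * ∑ i, (ℓ i x - (1 / (n : ℝ)) * ∑ j, ℓ j x) ^ 2 ≤ σ ^ 2) :
    (1 / (n : ℝ)) * ∑ i,
        ‖gradient (fun y => lam * ψs ((ℓ i y - G * η) / lam) + G * η) x
          - gradient (fun y => (1 / (n : ℝ)) * ∑ j, (lam * ψs ((ℓ j y - G * η) / lam) + G * η)) x‖ ^ 2
      ≤ (16 * G ^ 2 + 2 * G ^ 2 * M ^ 2 * σ ^ 2 / lam ^ 2)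
        + 16 * (deriv (fun t => (1 / (n : ℝ)) * ∑ j, (lam * ψs ((ℓ j x - G * t) / lam) + G * t)) η) ^ 2 := by
  classical
  have hn' : (0 : ℝ) < n := by exact_mod_cast hn
  have hlam' : lam ≠ 0 := ne_of_gt hlam
  set p : Fin n → ℝ := fun i => deriv ψs ((ℓ i x - G * η) / lam) with hp
  set v : Fin n → EuclideanSpace ℝ (Fin d) := fun i => gradient (ℓ i) x with hv
  set pbar : ℝ := (1 / (n : ℝ)) * ∑ j, p j with hpbar
  -- rewrite the per-sample gradients
  have hgi : ∀ i, gradient (fun y => lam * ψs ((ℓ i y - G * η) / lam) + G * η) x = p i • v i :=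
    fun i => (aux_grad lam (G * η) hlam' (ℓ i) (hdiff i) ψs hψdiff x).gradient
  -- the averaged gradient
  have hga : gradient (fun y => (1 / (n : ℝ)) * ∑ j, (lam * ψs ((ℓ j y - G * η) / lam) + G * η)) x
      = (1 / (n : ℝ)) • ∑ j, p j • v j := by
    refine HasGradientAt.gradient ?_
    rw [hasGradientAt_iff_hasFDerivAt]
    have hsum : HasFDerivAt (fun y => ∑ j, (lam * ψs ((ℓ j y - G * η) / lam) + G * η))
        (∑ j, (toDual ℝ (EuclideanSpace ℝ (Fin d))) (p j • v j)) x :=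
      HasFDerivAt.fun_sum fun j _ =>
        (aux_grad lam (G * η) hlam' (ℓ j) (hdiff j) ψs hψdiff x).hasFDerivAt
    have := hsum.const_mul (1 / (n : ℝ))
    convert this using 1
    any_goals rfl
    rw [map_smul, map_sum]
  -- the η-derivative
  have hde : deriv (fun t => (1 / (n : ℝ)) * ∑ j, (lam * ψs ((ℓ j x - G * t) / lam) + G * t)) η
      = (1 / (n : ℝ)) * ∑ j, (G - G * p j) := by
    have hterm : ∀ j : Fin n, HasDerivAt (fun t => lam * ψs ((ℓ j x - G * t) / lam) + G * t)
        (G - G * p j) η := by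
      intro j
      have hinner : HasDerivAt (fun t : ℝ => (ℓ j x - G * t) / lam) (-G / lam) η := by
        have := (((hasDerivAt_id η).const_mul G).const_sub (ℓ j x)).div_const lam
        convert this using 1
        any_goals rfl
        ring
      have hout := ((hψdiff _).hasDerivAt.comp η hinner).const_mul lam
      have hlin : HasDerivAt (fun t : ℝ => G * t) G η := by
        simpa using (hasDerivAt_id η).const_mul G
      have := hout.add hlin
      convert this using 1
      any_goals rfl
      simp only [hp]
      field_simp
      ring
    exact ((HasDerivAt.fun_sum (fun j _ => hterm j)).const_mul (1 / (n : ℝ))).deriv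
  rw [hde]
  simp only [hgi, hga]
  set h : ℝ := (1 / (n : ℝ)) * ∑ j, (G - G * p j) with hh
  -- basic facts
  have hppos : ∀ i, 0 ≤ p i := fun i => hψpos _
  have hpbarpos : 0 ≤ pbar := by
    apply mul_nonneg (by positivity)
    exact Finset.sum_nonneg fun j _ => hppos j
  have hvG : ∀ i, ‖v i‖ ≤ G := fun i => aux_norm_grad G hG.le (ℓ i) (hlip i) x
  have hGpbar : G * pbar = G - h := by
    rw [hh, hpbar]
    rw [Finset.sum_sub_distrib, Finset.sum_const, Finset.card_univ, Fintype.card_fin,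
      ← Finset.mul_sum]
    field_simp
    ring
  -- decomposition
  have hdecomp : ∀ i, p i • v i - (1 / (n : ℝ)) • ∑ j, p j • v j
      = (p i - pbar) • v i + (1 / (n : ℝ)) • ∑ j, p j • (v i - v j) := by
    intro i
    have hs : ∑ j, p j • (v i - v j) = (∑ j, p j) • v i - ∑ j, p j • v j := by
      simp [smul_sub, Finset.sum_sub_distrib, Finset.sum_smul]
    rw [hs, smul_sub, sub_smul, smul_smul, hpbar]
    abel
  -- per-sample norm bound
  have hkey : ∀ i, ‖p i • v i - (1 / (n : ℝ)) • ∑ j, p j • v j‖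
      ≤ G * |p i - pbar| + 2 * G * pbar := by
    intro i
    rw [hdecomp i]
    have h1 : ‖(p i - pbar) • v i‖ ≤ |p i - pbar| * G := by
      rw [norm_smul, Real.norm_eq_abs]
      exact mul_le_mul_of_nonneg_left (hvG i) (abs_nonneg _)
    have h2 : ‖(1 / (n : ℝ)) • ∑ j, p j • (v i - v j)‖ ≤ 2 * G * pbar := by
      rw [norm_smul, Real.norm_eq_abs, abs_of_nonneg (by positivity : (0:ℝ) ≤ 1 / (n:ℝ))]
      have hb : ‖∑ j, p j • (v i - v j)‖ ≤ ∑ j, p j * (2 * G) := by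
        refine (norm_sum_le _ _).trans (Finset.sum_le_sum fun j _ => ?_)
        rw [norm_smul, Real.norm_eq_abs, abs_of_nonneg (hppos j)]
        refine mul_le_mul_of_nonneg_left ?_ (hppos j)
        calc ‖v i - v j‖ ≤ ‖v i‖ + ‖v j‖ := norm_sub_le _ _
          _ ≤ 2 * G := by linarith [hvG i, hvG j]
      calc (1 / (n : ℝ)) * ‖∑ j, p j • (v i - v j)‖
          ≤ (1 / (n : ℝ)) * ∑ j, p j * (2 * G) := by
            exact mul_le_mul_of_nonneg_left hb (by positivity)
        _ = 2 * G * pbar := by rw [← Finset.sum_mul, hpbar]; ring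
    calc ‖_ + _‖ ≤ ‖(p i - pbar) • v i‖ + ‖(1 / (n : ℝ)) • ∑ j, p j • (v i - v j)‖ :=
          norm_add_le _ _
      _ ≤ G * |p i - pbar| + 2 * G * pbar := by rw [mul_comm G]; exact add_le_add h1 h2
  -- squared bound
  have hsq : ∀ i, ‖p i • v i - (1 / (n : ℝ)) • ∑ j, p j • v j‖ ^ 2
      ≤ 2 * G ^ 2 * (p i - pbar) ^ 2 + 8 * G ^ 2 * pbar ^ 2 := by
    intro i
    have h0 : (0:ℝ) ≤ ‖p i • v i - (1 / (n : ℝ)) • ∑ j, p j • v j‖ := norm_nonneg _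
    have h1 := hkey i
    have h2 : ‖p i • v i - (1 / (n : ℝ)) • ∑ j, p j • v j‖ ^ 2
        ≤ (G * |p i - pbar| + 2 * G * pbar) ^ 2 := by
      apply pow_le_pow_left₀ h0 h1
    refine h2.trans ?_
    have habs : |p i - pbar| ^ 2 = (p i - pbar) ^ 2 := sq_abs _
    nlinarith [sq_nonneg (G * |p i - pbar| - 2 * G * pbar)]
  -- variance of p
  have hVp : (1 / (n : ℝ)) * ∑ i, (p i - pbar) ^ 2 ≤ M ^ 2 * σ ^ 2 / lam ^ 2 := by
    set q : ℝ := deriv ψs (((1 / (n : ℝ)) * ∑ j, ℓ j x - G * η) / lam) with hq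
    have h1 : ∑ i, (p i - pbar) ^ 2 ≤ ∑ i, (p i - q) ^ 2 := aux_var_min hn p q
    have h2 : ∀ i, (p i - q) ^ 2
        ≤ M ^ 2 / lam ^ 2 * (ℓ i x - (1 / (n : ℝ)) * ∑ j, ℓ j x) ^ 2 := by
      intro i
      have ha : |p i - q| ≤ M / lam * |ℓ i x - (1 / (n : ℝ)) * ∑ j, ℓ j x| := by
        have := hψlip ((ℓ i x - G * η) / lam) (((1 / (n : ℝ)) * ∑ j, ℓ j x - G * η) / lam)
        rw [div_sub_div_same, abs_div, abs_of_pos hlam] at this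
        calc |p i - q| ≤ M * (|ℓ i x - G * η - ((1 / (n : ℝ)) * ∑ j, ℓ j x - G * η)| / lam) :=
              this
          _ = M / lam * |ℓ i x - (1 / (n : ℝ)) * ∑ j, ℓ j x| := by
              rw [show ℓ i x - G * η - ((1 / (n : ℝ)) * ∑ j, ℓ j x - G * η)
                  = ℓ i x - (1 / (n : ℝ)) * ∑ j, ℓ j x by ring]
              ring
      have h0 : (0:ℝ) ≤ M / lam * |ℓ i x - (1 / (n : ℝ)) * ∑ j, ℓ j x| := by positivity
      calc (p i - q) ^ 2 = |p i - q| ^ 2 := (sq_abs _).symm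
        _ ≤ (M / lam * |ℓ i x - (1 / (n : ℝ)) * ∑ j, ℓ j x|) ^ 2 :=
            pow_le_pow_left₀ (abs_nonneg _) ha 2
        _ = M ^ 2 / lam ^ 2 * (ℓ i x - (1 / (n : ℝ)) * ∑ j, ℓ j x) ^ 2 := by
            rw [mul_pow, div_pow, sq_abs]
    have h3 : ∑ i, (p i - q) ^ 2
        ≤ M ^ 2 / lam ^ 2 * ∑ i, (ℓ i x - (1 / (n : ℝ)) * ∑ j, ℓ j x) ^ 2 := by
      rw [Finset.mul_sum]
      exact Finset.sum_le_sum fun i _ => h2 i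
    have h4 : (1 / (n : ℝ)) * ∑ i, (p i - pbar) ^ 2
        ≤ M ^ 2 / lam ^ 2 * ((1 / (n : ℝ)) * ∑ i, (ℓ i x - (1 / (n : ℝ)) * ∑ j, ℓ j x) ^ 2) := by
      calc (1 / (n : ℝ)) * ∑ i, (p i - pbar) ^ 2
          ≤ (1 / (n : ℝ)) * (M ^ 2 / lam ^ 2 * ∑ i, (ℓ i x - (1 / (n : ℝ)) * ∑ j, ℓ j x) ^ 2) :=
            mul_le_mul_of_nonneg_left (h1.trans h3) (by positivity)
        _ = _ := by ring
    refine h4.trans ?_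
    have := mul_le_mul_of_nonneg_left hvar (by positivity : (0:ℝ) ≤ M ^ 2 / lam ^ 2)
    calc M ^ 2 / lam ^ 2 * ((1 / (n : ℝ)) * ∑ i, (ℓ i x - (1 / (n : ℝ)) * ∑ j, ℓ j x) ^ 2)
        ≤ M ^ 2 / lam ^ 2 * σ ^ 2 := this
      _ = M ^ 2 * σ ^ 2 / lam ^ 2 := by ring
  clear_value p v pbar h
  -- pbar bound
  have hpb : 8 * G ^ 2 * pbar ^ 2 ≤ 16 * G ^ 2 + 16 * h ^ 2 := by
    have h2 : G ^ 2 * pbar ^ 2 = (G - h) ^ 2 := by rw [← mul_pow, hGpbar]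
    nlinarith [sq_nonneg (G + h), h2]
  -- assemble
  have hmain : (1 / (n : ℝ)) * ∑ i, ‖p i • v i - (1 / (n : ℝ)) • ∑ j, p j • v j‖ ^ 2
      ≤ 2 * G ^ 2 * ((1 / (n : ℝ)) * ∑ i, (p i - pbar) ^ 2) + 8 * G ^ 2 * pbar ^ 2 := by
    have h1 : ∑ i, ‖p i • v i - (1 / (n : ℝ)) • ∑ j, p j • v j‖ ^ 2
        ≤ ∑ i, (2 * G ^ 2 * (p i - pbar) ^ 2 + 8 * G ^ 2 * pbar ^ 2) :=
      Finset.sum_le_sum fun i _ => hsq i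
    have h2 : ∑ i, (2 * G ^ 2 * (p i - pbar) ^ 2 + 8 * G ^ 2 * pbar ^ 2)
        = 2 * G ^ 2 * ∑ i, (p i - pbar) ^ 2 + n * (8 * G ^ 2 * pbar ^ 2) := by
      rw [Finset.sum_add_distrib, Finset.sum_const, Finset.card_univ, Fintype.card_fin,
        ← Finset.mul_sum]
      push_cast
      ring
    calc (1 / (n : ℝ)) * ∑ i, ‖p i • v i - (1 / (n : ℝ)) • ∑ j, p j • v j‖ ^ 2
        ≤ (1 / (n : ℝ)) * (2 * G ^ 2 * ∑ i, (p i - pbar) ^ 2 + n * (8 * G ^ 2 * pbar ^ 2)) := by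
          rw [← h2]; exact mul_le_mul_of_nonneg_left h1 (by positivity)
      _ = 2 * G ^ 2 * ((1 / (n : ℝ)) * ∑ i, (p i - pbar) ^ 2) + 8 * G ^ 2 * pbar ^ 2 := by
          field_simp
  refine hmain.trans ?_
  have h5 := mul_le_mul_of_nonneg_left hVp (by positivity : (0:ℝ) ≤ 2 * G ^ 2)
  have heq : 2 * G ^ 2 * (M ^ 2 * σ ^ 2 / lam ^ 2) = 2 * G ^ 2 * M ^ 2 * σ ^ 2 / lam ^ 2 := by
    ring
  linarith [hpb, h5]
end

section
/- Primal–dual equivalence for penalized ψ-divergence DRO (Equation (4)): Let ψ: ℝ → ℝ ∪ {+∞} be convex and lower semicontinuous with ψ(1) = 0 and ψ(t) = +∞ for all t < 0, and let ψ*(s) = sup_{t∈ℝ}(st − ψ(t)) be its convex conjugate. Then for any λ > 0 and any ℓ₁,…,ℓₙ ∈ ℝ, sup over p ∈ Δₙ of (Σᵢ pᵢ ℓᵢ − (λ/n) Σᵢ ψ(n pᵢ)) equals inf over η ∈ ℝ of ((λ/n) Σᵢ ψ*((ℓᵢ − η)/λ) + η). -/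
open Finset

private noncomputable def ecoeHom : ℝ →+ EReal := ⟨⟨(↑), EReal.coe_zero⟩, EReal.coe_add⟩
private lemma ecoe_sum {n : ℕ} (g : Fin n → ℝ) :
    ((∑ i, g i : ℝ) : EReal) = ∑ i, (g i : EReal) := map_sum ecoeHom g Finset.univ
private lemma ecoe_sum' {α : Type*} (s : Finset α) (g : α → ℝ) :
    ((∑ i ∈ s, g i : ℝ) : EReal) = ∑ i ∈ s, (g i : EReal) := map_sum ecoeHom g s
private lemma esum_ne_bot {n : ℕ} (g : Fin n → EReal) (h : ∀ i, g i ≠ ⊥) :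
    ∑ i, g i ≠ ⊥ := by
  induction (Finset.univ : Finset (Fin n)) using Finset.cons_induction with
  | empty => simp
  | cons a s ha ih => rw [Finset.sum_cons]; simp [EReal.add_eq_bot_iff, ih, h a]
private lemma esum_eq_top {n : ℕ} (g : Fin n → EReal) (h : ∀ i, g i ≠ ⊥)
    (i0 : Fin n) (h0 : g i0 = ⊤) : ∑ i, g i = ⊤ := by
  rw [← Finset.add_sum_erase _ _ (Finset.mem_univ i0), h0]
  refine EReal.top_add_of_ne_bot ?_
  induction (Finset.univ.erase i0) using Finset.cons_induction with
  | empty => simp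
  | cons a s ha ih => rw [Finset.sum_cons]; simp [EReal.add_eq_bot_iff, ih, h a]
private lemma ereal_exists_real (x : EReal) (hb : x ≠ ⊥) (ht : x ≠ ⊤) : ∃ r : ℝ, x = (r : EReal) :=
  ⟨x.toReal, (EReal.coe_toReal ht hb).symm⟩
private lemma h_obj_iff (a c' k : ℝ) (hk : 0 < k) (x : EReal) (hx : x ≠ ⊥) :
    ((c' : EReal) ≤ (a : EReal) - (k : EReal) * x) ↔ x ≤ (((a - c') / k : ℝ) : EReal) := by
  induction x using EReal.rec with
  | bot => exact absurd rfl hx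
  | coe r =>
      rw [← EReal.coe_mul, ← EReal.coe_sub, EReal.coe_le_coe_iff, EReal.coe_le_coe_iff,
        le_div_iff₀ hk]
      constructor <;> intro <;> nlinarith
  | top =>
      rw [EReal.coe_mul_top_of_pos hk, EReal.sub_top]
      simp

private noncomputable def objF {n : ℕ} (lam : ℝ) (ℓ : Fin n → ℝ) (ψ : ℝ → EReal)
    (p : Fin n → ℝ) : EReal :=
  ((∑ i, p i * ℓ i : ℝ) : EReal) - ((lam / n : ℝ) : EReal) * ∑ i, ψ ((n : ℝ) * p i)

/-- key reformulation: `c' ≤ objF p ↔ ∑ ψ(n pᵢ) ≤ (∑ pᵢℓᵢ - c') / (lam/n)`. -/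
private lemma objF_le_iff {n : ℕ} (lam : ℝ) (ℓ : Fin n → ℝ) (ψ : ℝ → EReal)
    (hψbot : ∀ t, ψ t ≠ ⊥) (hk : 0 < lam / n) (p : Fin n → ℝ) (c' : ℝ) :
    ((c' : EReal) ≤ objF lam ℓ ψ p) ↔
      (∑ i, ψ ((n : ℝ) * p i))
        ≤ ((((∑ i, p i * ℓ i) - c') / (lam / n) : ℝ) : EReal) :=
  h_obj_iff _ _ _ hk _ (esum_ne_bot _ fun i => hψbot _)

/-- if the ψ-sum is bounded by a real, each component is real. -/
private lemma components_real {n : ℕ} (ψ : ℝ → EReal) (hψbot : ∀ t, ψ t ≠ ⊥)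
    (v : Fin n → ℝ) (w : ℝ) (h : ∑ i, ψ (v i) ≤ (w : EReal)) :
    ∃ q : Fin n → ℝ, (∀ i, ψ (v i) = (q i : EReal)) ∧ ∑ i, q i ≤ w := by
  have hne : ∀ i, ψ (v i) ≠ ⊤ := by
    intro i hi
    rw [esum_eq_top _ (fun j => hψbot _) i hi] at h
    exact absurd h (by simp)
  choose q hq using fun i => ereal_exists_real (ψ (v i)) (hψbot _) (hne i)
  refine ⟨q, hq, ?_⟩
  rw [show ∑ i, ψ (v i) = ((∑ i, q i : ℝ) : EReal) by
    rw [ecoe_sum]; exact Finset.sum_congr rfl fun i _ => hq i] at h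
  exact_mod_cast h

private def hypoSet {n : ℕ} (lam : ℝ) (ℓ : Fin n → ℝ) (ψ : ℝ → EReal) : Set (ℝ × ℝ) :=
  {x | ∃ p : Fin n → ℝ, (∀ i, 0 ≤ p i) ∧ ∑ i, p i = x.1 ∧ (x.2 : EReal) ≤ objF lam ℓ ψ p}

private lemma hypoSet_convex {n : ℕ} (hn : 0 < n) (lam : ℝ) (hlam : 0 < lam)
    (ℓ : Fin n → ℝ) (ψ : ℝ → EReal)
    (hconv : ∀ a b t : ℝ, 0 ≤ t → t ≤ 1 →
      ψ (t * a + (1 - t) * b) ≤ (t : EReal) * ψ a + ((1 - t : ℝ) : EReal) * ψ b)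
    (hψbot : ∀ t, ψ t ≠ ⊥) :
    Convex ℝ (hypoSet lam ℓ ψ) := by
  have hnR : (0:ℝ) < n := Nat.cast_pos.2 hn
  have hk : (0:ℝ) < lam / n := div_pos hlam hnR
  rintro x ⟨p, hp0, hp1, hpobj⟩ y ⟨q, hq0, hq1, hqobj⟩ θ θ' hθ hθ' hθθ
  obtain ⟨a, ha, hasum⟩ := components_real ψ hψbot _ _
    ((objF_le_iff lam ℓ ψ hψbot hk p x.2).1 hpobj)
  obtain ⟨b, hb, hbsum⟩ := components_real ψ hψbot _ _
    ((objF_le_iff lam ℓ ψ hψbot hk q y.2).1 hqobj)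
  refine ⟨fun i => θ * p i + θ' * q i, fun i => add_nonneg (mul_nonneg hθ (hp0 i)) (mul_nonneg hθ' (hq0 i)), ?_, ?_⟩
  · rw [Finset.sum_add_distrib, ← Finset.mul_sum, ← Finset.mul_sum, hp1, hq1]
    simp [Prod.smul_def, smul_eq_mul]
  · have hsm2 : (θ • x + θ' • y).2 = θ * x.2 + θ' * y.2 := by
      simp [Prod.smul_def, smul_eq_mul]
    rw [hsm2, objF_le_iff lam ℓ ψ hψbot hk]
    have hA : ∑ i, (θ * p i + θ' * q i) * ℓ i
        = θ * ∑ i, p i * ℓ i + θ' * ∑ i, q i * ℓ i := by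
      rw [Finset.mul_sum, Finset.mul_sum, ← Finset.sum_add_distrib]
      exact Finset.sum_congr rfl fun i _ => by ring
    have hGi : ∀ i, ψ ((n:ℝ) * (θ * p i + θ' * q i))
        ≤ ((θ * a i + θ' * b i : ℝ) : EReal) := by
      intro i
      have harg : (n:ℝ) * (θ * p i + θ' * q i)
          = θ * ((n:ℝ) * p i) + (1 - θ) * ((n:ℝ) * q i) := by
        rw [show (1:ℝ) - θ = θ' by linarith]; ring
      have := hconv ((n:ℝ) * p i) ((n:ℝ) * q i) θ hθ (by linarith)
      rw [← harg, ha i, hb i] at this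
      calc ψ ((n:ℝ) * (θ * p i + θ' * q i))
          ≤ (θ : EReal) * ((a i : ℝ) : EReal) + ((1 - θ : ℝ) : EReal) * ((b i : ℝ) : EReal) :=
            this
        _ = ((θ * a i + θ' * b i : ℝ) : EReal) := by
            rw [← EReal.coe_mul, ← EReal.coe_mul, ← EReal.coe_add]
            congr 1
            rw [show (1:ℝ) - θ = θ' by linarith]
    calc ∑ i, ψ ((n:ℝ) * (θ * p i + θ' * q i))
        ≤ ∑ i, ((θ * a i + θ' * b i : ℝ) : EReal) := Finset.sum_le_sum fun i _ => hGi i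
      _ = ((∑ i, (θ * a i + θ' * b i) : ℝ) : EReal) := (ecoe_sum _).symm
      _ ≤ ((((∑ i, (θ * p i + θ' * q i) * ℓ i) - (θ * x.2 + θ' * y.2)) / (lam / n) : ℝ) :
            EReal) := by
          rw [EReal.coe_le_coe_iff, hA]
          rw [Finset.sum_add_distrib, ← Finset.mul_sum, ← Finset.mul_sum]
          rw [le_div_iff₀ hk]
          have e1 : ∑ i, a i ≤ ((∑ i, p i * ℓ i) - x.2) / (lam / n) := hasum
          have e2 : ∑ i, b i ≤ ((∑ i, q i * ℓ i) - y.2) / (lam / n) := hbsum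
          rw [le_div_iff₀ hk] at e1 e2
          nlinarith [mul_le_mul_of_nonneg_left e1 hθ, mul_le_mul_of_nonneg_left e2 hθ']

private lemma esum_approx {n : ℕ} (g : Fin n → EReal) (hg : ∀ i, g i ≠ ⊥) (γ : ℝ)
    (h : (γ : EReal) < ∑ i, g i) :
    ∃ r : Fin n → ℝ, (∀ i, (r i : EReal) ≤ g i) ∧ γ < ∑ i, r i := by
  by_cases htop : ∃ i0, g i0 = ⊤
  · obtain ⟨i0, hi0⟩ := htop
    set K : ℝ := |γ| + ∑ i, |(g i).toReal| + 1 with hK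
    refine ⟨fun i => if g i = ⊤ then K else (g i).toReal, fun i => ?_, ?_⟩
    · by_cases hi : g i = ⊤
      · simp [hi]
      · simp only [hi, if_neg, ite_false]
        rw [EReal.coe_toReal hi (hg i)]
    · have hbound : ∀ i, -|(g i).toReal| ≤ (if g i = ⊤ then K else (g i).toReal) := by
        intro i
        by_cases hi : g i = ⊤
        · simp only [hi, ite_true]
          have hK0 : (0:ℝ) ≤ K := by
            have : (0:ℝ) ≤ ∑ i, |(g i).toReal| := Finset.sum_nonneg fun i _ => abs_nonneg _
            have := abs_nonneg γ
            simp only [hK]; linarith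
          exact le_trans (neg_nonpos.2 (abs_nonneg _)) hK0
        · simp only [hi, ite_false]
          exact neg_abs_le _
      have h1 : ∑ i ∈ Finset.univ.erase i0, (-|(g i).toReal|)
          ≤ ∑ i ∈ Finset.univ.erase i0, (if g i = ⊤ then K else (g i).toReal) :=
        Finset.sum_le_sum fun i _ => hbound i
      have h2 : ∑ i ∈ Finset.univ.erase i0, |(g i).toReal| ≤ ∑ i, |(g i).toReal| :=
        Finset.sum_le_sum_of_subset_of_nonneg (Finset.subset_univ _)
          (fun i _ _ => abs_nonneg _)
      rw [← Finset.add_sum_erase _ _ (Finset.mem_univ i0)]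
      simp only [hi0, ite_true]
      have : -∑ i ∈ Finset.univ.erase i0, |(g i).toReal|
          = ∑ i ∈ Finset.univ.erase i0, (-|(g i).toReal|) := by
        rw [Finset.sum_neg_distrib]
      linarith [le_abs_self γ]
  · push_neg at htop
    refine ⟨fun i => (g i).toReal, fun i => by rw [EReal.coe_toReal (htop i) (hg i)], ?_⟩
    have : ∑ i, g i = ((∑ i, (g i).toReal : ℝ) : EReal) := by
      rw [ecoe_sum]
      exact Finset.sum_congr rfl fun i _ => (EReal.coe_toReal (htop i) (hg i)).symm
    rw [this, EReal.coe_lt_coe_iff] at h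
    exact h

private lemma not_mem_closure_hypo {n : ℕ} (hn : 0 < n) (lam : ℝ) (hlam : 0 < lam)
    (ℓ : Fin n → ℝ) (ψ : ℝ → EReal) (hψbot : ∀ t, ψ t ≠ ⊥)
    (hlsc : LowerSemicontinuous ψ) (Pr c : ℝ)
    (hP : ∀ p : Fin n → ℝ, (∀ i, 0 ≤ p i) → ∑ i, p i = 1 → objF lam ℓ ψ p ≤ (Pr : EReal))
    (hc : Pr < c) :
    ((1 : ℝ), c) ∉ closure (hypoSet lam ℓ ψ) := by
  have hnR : (0:ℝ) < n := Nat.cast_pos.2 hn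
  have hk : (0:ℝ) < lam / n := div_pos hlam hnR
  intro hmem
  obtain ⟨y, hyS, hylim⟩ := mem_closure_iff_seq_limit.1 hmem
  choose p hp0 hp1 hobj using hyS
  have h1 : Filter.Tendsto (fun k => (y k).1) Filter.atTop (nhds 1) :=
    (continuous_fst.tendsto _).comp hylim
  have h2 : Filter.Tendsto (fun k => (y k).2) Filter.atTop (nhds c) :=
    (continuous_snd.tendsto _).comp hylim
  obtain ⟨C, hC⟩ := h1.bddAbove_range
  set C' : ℝ := max C 0 with hC'
  have hbox : ∀ k, p k ∈ Set.Icc (0 : Fin n → ℝ) (fun _ => C') := by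
    intro k
    refine ⟨fun i => hp0 k i, fun i => ?_⟩
    have h3 : p k i ≤ ∑ j, p k j :=
      Finset.single_le_sum (fun j _ => hp0 k j) (Finset.mem_univ i)
    have h4 : (y k).1 ≤ C := hC (Set.mem_range_self k)
    calc p k i ≤ (y k).1 := by rw [← hp1 k]; exact h3
      _ ≤ C := h4
      _ ≤ C' := le_max_left _ _
  obtain ⟨q, hqbox, φ, hφ, hqlim⟩ := isCompact_Icc.tendsto_subseq hbox
  have hq0 : ∀ i, 0 ≤ q i := fun i => hqbox.1 i
  have hco : ∀ i, Filter.Tendsto (fun k => p (φ k) i) Filter.atTop (nhds (q i)) := by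
    intro i
    exact ((continuous_apply i).tendsto _).comp hqlim
  have hqsum : ∑ i, q i = 1 := by
    have hs1 : Filter.Tendsto (fun k => ∑ i, p (φ k) i) Filter.atTop (nhds (∑ i, q i)) :=
      tendsto_finset_sum _ fun i _ => hco i
    have hs2 : Filter.Tendsto (fun k => ∑ i, p (φ k) i) Filter.atTop (nhds 1) := by
      have := h1.comp (hφ.tendsto_atTop)
      refine this.congr fun k => ?_
      exact (hp1 (φ k)).symm
    exact tendsto_nhds_unique hs1 hs2
  set c' : ℝ := (Pr + c) / 2 with hc'_def
  have hc1 : Pr < c' := by simp only [hc'_def]; linarith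
  have hc2 : c' < c := by simp only [hc'_def]; linarith
  -- eventually the objective along the subsequence is ≥ c'
  have hev : ∀ᶠ k in Filter.atTop, (c' : EReal) ≤ objF lam ℓ ψ (p (φ k)) := by
    have h2' : Filter.Tendsto (fun k => (y (φ k)).2) Filter.atTop (nhds c) :=
      h2.comp hφ.tendsto_atTop
    filter_upwards [h2'.eventually (eventually_gt_nhds hc2)] with k hk2
    exact le_trans (EReal.coe_le_coe_iff.2 hk2.le) (hobj (φ k))
  -- limit quantities
  set A : ℕ → ℝ := fun k => ∑ i, p (φ k) i * ℓ i with hA_def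
  set Ainf : ℝ := ∑ i, q i * ℓ i with hAinf_def
  have hAlim : Filter.Tendsto A Filter.atTop (nhds Ainf) := by
    apply tendsto_finset_sum
    intro i _
    exact (hco i).mul_const (ℓ i)
  set β : ℕ → ℝ := fun k => (A k - c') / (lam / n) with hβ_def
  set binf : ℝ := (Ainf - c') / (lam / n) with hbinf_def
  have hβlim : Filter.Tendsto β Filter.atTop (nhds binf) :=
    (hAlim.sub_const c').div_const _
  -- G(q) > binf, since obj q ≤ Pr < c'
  have hqobj : ¬ ((c' : EReal) ≤ objF lam ℓ ψ q) := by
    intro hcon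
    have := le_trans hcon (hP q hq0 hqsum)
    rw [EReal.coe_le_coe_iff] at this
    linarith
  have hGq : ((binf : ℝ) : EReal) < ∑ i, ψ ((n : ℝ) * q i) := by
    rw [objF_le_iff lam ℓ ψ hψbot hk q c'] at hqobj
    exact lt_of_not_ge hqobj
  obtain ⟨r, hr, hrsum⟩ := esum_approx _ (fun i => hψbot _) _ hGq
  set δ : ℝ := (∑ i, r i - binf) / (2 * n) with hδ_def
  have hδpos : 0 < δ := by
    apply div_pos (by linarith) (by positivity)
  set bet2 : ℝ := binf + (∑ i, r i - binf) / 2 with hbet2_def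
  have hbet2gt : binf < bet2 := by simp only [hbet2_def]; linarith
  have hsum_rδ : ∑ i, (r i - δ) = bet2 := by
    rw [Finset.sum_sub_distrib, Finset.sum_const, Finset.card_univ, Fintype.card_fin]
    simp only [hδ_def, hbet2_def, nsmul_eq_mul]
    field_simp
    ring
  -- eventually G(p (φ k)) ≥ bet2
  have hlow : ∀ᶠ k in Filter.atTop, ((bet2 : ℝ) : EReal) ≤ ∑ i, ψ ((n:ℝ) * p (φ k) i) := by
    have hevi : ∀ i : Fin n, ∀ᶠ k in Filter.atTop,
        ((r i - δ : ℝ) : EReal) < ψ ((n:ℝ) * p (φ k) i) := by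
      intro i
      have harg : Filter.Tendsto (fun k => (n:ℝ) * p (φ k) i) Filter.atTop
          (nhds ((n:ℝ) * q i)) := (hco i).const_mul _
      have hlt : ((r i - δ : ℝ) : EReal) < ψ ((n:ℝ) * q i) :=
        lt_of_lt_of_le (EReal.coe_lt_coe_iff.2 (by linarith)) (hr i)
      exact harg.eventually (hlsc ((n:ℝ) * q i) _ hlt)
    filter_upwards [Filter.eventually_all.2 hevi] with k hk2
    calc ((bet2 : ℝ) : EReal) = ((∑ i, (r i - δ) : ℝ) : EReal) := by rw [hsum_rδ]
      _ = ∑ i, (((r i - δ : ℝ)) : EReal) := ecoe_sum _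
      _ ≤ ∑ i, ψ ((n:ℝ) * p (φ k) i) := Finset.sum_le_sum fun i _ => (hk2 i).le
  -- eventually β k < bet2
  have hup : ∀ᶠ k in Filter.atTop, β k < bet2 := hβlim.eventually (eventually_lt_nhds hbet2gt)
  -- combine
  have hGup : ∀ᶠ k in Filter.atTop,
      ∑ i, ψ ((n:ℝ) * p (φ k) i) ≤ ((β k : ℝ) : EReal) := by
    filter_upwards [hev] with k hk2
    exact (objF_le_iff lam ℓ ψ hψbot hk _ c').1 hk2
  obtain ⟨k, hk1, hk2, hk3⟩ := (hlow.and (hup.and hGup)).exists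
  have : ((bet2 : ℝ) : EReal) ≤ ((β k : ℝ) : EReal) := le_trans hk1 hk3
  rw [EReal.coe_le_coe_iff] at this
  linarith

private lemma esum_eq_bot {n : ℕ} (g : Fin n → EReal) (i0 : Fin n) (h0 : g i0 = ⊥) :
    ∑ i, g i = ⊥ := by
  rw [← Finset.add_sum_erase _ _ (Finset.mem_univ i0), h0, EReal.bot_add]

private lemma h_le_of_forall (x : EReal) (d : ℝ) (h : ∀ r : ℝ, (r : EReal) ≤ x → r ≤ d) :
    x ≤ (d : EReal) := by
  induction x using EReal.rec with
  | bot => exact bot_le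
  | coe r => exact EReal.coe_le_coe_iff.2 (h r le_rfl)
  | top => exact absurd (h (d + 1) le_top) (by linarith)

private lemma h_add_le (x : EReal) (k M : ℝ) (h : x + (k : EReal) ≤ (M : EReal)) :
    x ≤ ((M - k : ℝ) : EReal) := by
  induction x using EReal.rec with
  | bot => exact bot_le
  | coe r =>
      rw [← EReal.coe_add, EReal.coe_le_coe_iff] at h
      rw [EReal.coe_le_coe_iff]; linarith
  | top => rw [EReal.top_add_coe] at h; exact absurd h (by simp)

private noncomputable def dualF {n : ℕ} (lam : ℝ) (ℓ : Fin n → ℝ) (ψ : ℝ → EReal)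
    (η : ℝ) : EReal :=
  ((lam / n : ℝ) : EReal) * ∑ i, (⨆ t : ℝ, ((((ℓ i - η) / lam) * t : ℝ) : EReal) - ψ t)
    + (η : EReal)

private lemma obj_unif {n : ℕ} (hn : 0 < n) (lam : ℝ) (ℓ : Fin n → ℝ) (ψ : ℝ → EReal)
    (hone : ψ 1 = 0) :
    objF lam ℓ ψ (fun _ => 1 / n) = ((∑ i, (1 / n : ℝ) * ℓ i : ℝ) : EReal) := by
  have hnR : (0:ℝ) < n := Nat.cast_pos.2 hn
  rw [objF]
  have : ∀ i : Fin n, ψ ((n : ℝ) * (1 / n)) = 0 := by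
    intro i
    rw [mul_one_div_cancel hnR.ne', hone]
  rw [Finset.sum_congr rfl fun i _ => this i, Finset.sum_const]
  simp

private lemma strong_duality {n : ℕ} (hn : 0 < n) (lam : ℝ) (hlam : 0 < lam)
    (ℓ : Fin n → ℝ) (ψ : ℝ → EReal)
    (hconv : ∀ a b t : ℝ, 0 ≤ t → t ≤ 1 →
      ψ (t * a + (1 - t) * b) ≤ (t : EReal) * ψ a + ((1 - t : ℝ) : EReal) * ψ b)
    (hψbot : ∀ t, ψ t ≠ ⊥) (hlsc : LowerSemicontinuous ψ) (hone : ψ 1 = 0)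
    (hneg : ∀ t : ℝ, t < 0 → ψ t = ⊤) (Pr c : ℝ)
    (hP : ∀ p : Fin n → ℝ, (∀ i, 0 ≤ p i) → ∑ i, p i = 1 → objF lam ℓ ψ p ≤ (Pr : EReal))
    (hc : Pr < c) : ∃ η : ℝ, dualF lam ℓ ψ η ≤ (c : EReal) := by
  have hnR : (0:ℝ) < n := Nat.cast_pos.2 hn
  have hk : (0:ℝ) < lam / n := div_pos hlam hnR
  -- separation
  obtain ⟨φf, u, hSlt, hxgt⟩ :=
    geometric_hahn_banach_closed_point (E := ℝ × ℝ)
      (hypoSet_convex hn lam hlam ℓ ψ hconv hψbot).closure isClosed_closure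
      (not_mem_closure_hypo hn lam hlam ℓ ψ hψbot hlsc Pr c hP hc)
  set A : ℝ := φf (1, 0) with hA_def
  set B : ℝ := φf (0, 1) with hB_def
  have hrep : ∀ v r : ℝ, φf (v, r) = v * A + r * B := by
    intro v r
    have : (v, r) = v • ((1:ℝ), (0:ℝ)) + r • ((0:ℝ), (1:ℝ)) := by
      simp [Prod.ext_iff]
    rw [this, map_add, map_smul, map_smul, smul_eq_mul, smul_eq_mul]
  have hmemS : ∀ p : Fin n → ℝ, (∀ i, 0 ≤ p i) → ∀ r : ℝ,
      (r : EReal) ≤ objF lam ℓ ψ p → (∑ i, p i) * A + r * B < u := by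
    intro p hp r hr
    have hin : ((∑ i, p i : ℝ), r) ∈ hypoSet lam ℓ ψ := ⟨p, hp, rfl, hr⟩
    have := hSlt _ (subset_closure hin)
    rwa [hrep] at this
  set lbar : ℝ := ∑ i, (1 / n : ℝ) * ℓ i with hlbar_def
  have hunif0 : ∀ i : Fin n, (0:ℝ) ≤ 1 / n := fun _ => by positivity
  have hunif_obj : ((lbar : ℝ) : EReal) ≤ objF lam ℓ ψ (fun _ => 1 / n) := by
    rw [obj_unif hn lam ℓ ψ hone]
  have hunif_sum : ∑ _i : Fin n, (1 / n : ℝ) = 1 := by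
    rw [Finset.sum_const, Finset.card_univ, Fintype.card_fin, nsmul_eq_mul]
    field_simp
  have hunif_lt : ∀ r : ℝ, r ≤ lbar → A + r * B < u := by
    intro r hr
    have := hmemS (fun _ => 1 / n) hunif0 r
      (le_trans (EReal.coe_le_coe_iff.2 hr) hunif_obj)
    rwa [hunif_sum, one_mul] at this
  have hBpos : 0 < B := by
    rcases lt_trichotomy B 0 with hB | hB | hB
    · exfalso
      set r : ℝ := min lbar ((u - A) / B - 1) with hr_def
      have h5 := hunif_lt r (min_le_left _ _)
      have hXB : ((u - A) / B) * B = u - A := div_mul_cancel₀ _ hB.ne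
      have h6 : r ≤ (u - A) / B - 1 := min_le_right _ _
      nlinarith [mul_le_mul_of_nonpos_right h6 hB.le]
    · exfalso
      have h5 := hunif_lt lbar le_rfl
      have h6 := hxgt
      rw [hrep] at h6
      rw [hB] at h5 h6
      simp at h5 h6
      linarith
    · exact hB
  set η : ℝ := -A / B with hη_def
  have hxgt' : u < A + c * B := by have := hxgt; rwa [hrep, one_mul] at this
  have Hp : ∀ p : Fin n → ℝ, (∀ i, 0 ≤ p i) →
      objF lam ℓ ψ p ≤ ((c + η * ((∑ i, p i) - 1) : ℝ) : EReal) := by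
    intro p hp
    apply h_le_of_forall
    intro r hr
    have h5 := hmemS p hp r hr
    have key : c + (-A / B) * ((∑ i, p i) - 1) = (A + c * B - (∑ i, p i) * A) / B := by
      field_simp
      ring
    rw [hη_def, key]
    refine le_of_lt ((lt_div_iff₀ hBpos).2 ?_)
    linarith
  -- dual side
  set s : Fin n → ℝ := fun i => (ℓ i - η) / lam with hs_def
  set T : Fin n → EReal := fun i => ⨆ t : ℝ, ((s i * t : ℝ) : EReal) - ψ t with hT_def
  have hTlb : ∀ i, ((s i : ℝ) : EReal) ≤ T i := by
    intro i
    have := le_iSup (fun t : ℝ => ((s i * t : ℝ) : EReal) - ψ t) 1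
    rw [mul_one, hone] at this
    simpa [hT_def] using this
  have hTbot : ∀ i, T i ≠ ⊥ := fun i => ((EReal.bot_lt_coe (s i)).trans_le (hTlb i)).ne'
  set M : ℝ := (c - η) * n / lam with hM_def
  -- tuple bound
  have htuple : ∀ t : Fin n → ℝ, ∑ i, (((s i * t i : ℝ) : EReal) - ψ (t i)) ≤ (M : EReal) := by
    intro t
    by_cases hneg' : ∃ i, t i < 0
    · obtain ⟨i0, hi0⟩ := hneg'
      have : ((s i0 * t i0 : ℝ) : EReal) - ψ (t i0) = ⊥ := by
        rw [hneg _ hi0, EReal.sub_top]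
      rw [esum_eq_bot _ i0 this]
      exact bot_le
    · push_neg at hneg'
      by_cases htop' : ∃ i, ψ (t i) = ⊤
      · obtain ⟨i0, hi0⟩ := htop'
        have : ((s i0 * t i0 : ℝ) : EReal) - ψ (t i0) = ⊥ := by
          rw [hi0, EReal.sub_top]
        rw [esum_eq_bot _ i0 this]
        exact bot_le
      · push_neg at htop'
        choose q hq using fun i => ereal_exists_real (ψ (t i)) (hψbot _) (htop' i)
        have hp0' : ∀ i, (0:ℝ) ≤ t i / n := fun i => div_nonneg (hneg' i) hnR.le
        have harg : ∀ i : Fin n, (n : ℝ) * (t i / n) = t i := by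
          intro i; field_simp
        have HP := Hp (fun i => t i / n) hp0'
        have hobj_eq : objF lam ℓ ψ (fun i => t i / n)
            = (((∑ i, (t i / n) * ℓ i) - (lam / n) * (∑ i, q i) : ℝ) : EReal) := by
          simp only [objF]
          have h8 : ∑ i, ψ ((n:ℝ) * (t i / ↑n)) = ((∑ i, q i : ℝ) : EReal) := by
            rw [ecoe_sum]
            exact Finset.sum_congr rfl fun i _ => by rw [harg i, hq i]
          rw [h8, ← EReal.coe_mul, ← EReal.coe_sub]
        rw [hobj_eq, EReal.coe_le_coe_iff] at HP
        set Tl : ℝ := ∑ i, t i * ℓ i with hTl_def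
        set Ts : ℝ := ∑ i, t i with hTs_def
        set Q : ℝ := ∑ i, q i with hQ_def
        have hTl : ∑ i, (t i / n) * ℓ i = Tl / n := by
          rw [hTl_def, Finset.sum_div]
          exact Finset.sum_congr rfl fun i _ => by ring
        have hTs : ∑ i, (t i / n) = Ts / n := by rw [hTs_def, Finset.sum_div]
        rw [hTl, hTs] at HP
        -- HP : Tl / n - lam / n * Q ≤ c + η * (Ts / n - 1)
        have P1 : Tl - η * Ts - lam * Q ≤ (c - η) * n := by
          have h7 := mul_le_mul_of_nonneg_right HP hnR.le
          have e1 : (Tl / ↑n - lam / ↑n * Q) * ↑n = Tl - lam * Q := by field_simp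
          have e2 : (c + η * (Ts / ↑n - 1)) * ↑n = c * ↑n + η * Ts - η * ↑n := by
            field_simp; ring
          rw [e1, e2] at h7
          linarith
        have hsum_eq : ∑ i, (((s i * t i : ℝ) : EReal) - ψ (t i))
            = ((∑ i, (s i * t i - q i) : ℝ) : EReal) := by
          rw [ecoe_sum]
          exact Finset.sum_congr rfl fun i _ => by rw [hq i, ← EReal.coe_sub]
        rw [hsum_eq, EReal.coe_le_coe_iff]
        have hS : ∑ i, (s i * t i - q i) = (Tl - η * Ts) / lam - Q := by
          rw [Finset.sum_sub_distrib, ← hQ_def]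
          congr 1
          rw [show (Tl - η * Ts) / lam = ∑ i, (t i * ℓ i - η * t i) / lam by
            rw [← Finset.sum_div]; congr 1
            rw [Finset.sum_sub_distrib, ← Finset.mul_sum, ← hTl_def, ← hTs_def]]
          refine Finset.sum_congr rfl fun i _ => ?_
          rw [hs_def]
          field_simp
        rw [hS, hM_def]
        have e3 : (Tl - η * Ts) / lam - Q = (Tl - η * Ts - lam * Q) / lam := by
          field_simp
        rw [e3, div_le_div_iff₀ hlam hlam]
        nlinarith
  -- each T i is bounded above
  have hTub : ∀ i0 : Fin n, T i0 ≤ ((M - ∑ i ∈ Finset.univ.erase i0, s i : ℝ) : EReal) := by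
    intro i0
    rw [hT_def]
    refine iSup_le fun tv => ?_
    refine h_add_le _ _ _ ?_
    have := htuple (fun i => if i = i0 then tv else 1)
    rw [← Finset.add_sum_erase _ _ (Finset.mem_univ i0)] at this
    simp only [eq_self_iff_true, if_true] at this
    have herase : ∑ i ∈ Finset.univ.erase i0,
        (((s i * (if i = i0 then tv else 1) : ℝ) : EReal) - ψ (if i = i0 then tv else 1))
        = ((∑ i ∈ Finset.univ.erase i0, s i : ℝ) : EReal) := by
      rw [ecoe_sum']
      refine Finset.sum_congr rfl fun i hi => ?_
      have hine : i ≠ i0 := Finset.ne_of_mem_erase hi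
      rw [if_neg hine, mul_one, hone]
      simp
    rw [herase] at this
    exact this
  have hTtop : ∀ i, T i ≠ ⊤ := by
    intro i hi
    have := hTub i
    rw [hi, top_le_iff] at this
    exact EReal.coe_ne_top _ this
  choose σ hσ using fun i => ereal_exists_real (T i) (hTbot i) (hTtop i)
  have hσsum : ∑ i, σ i ≤ M := by
    by_contra hgt
    push_neg at hgt
    set ε : ℝ := ((∑ i, σ i) - M) / (2 * n) with hε_def
    have hεpos : 0 < ε := div_pos (by linarith) (by positivity)
    have hchoice : ∀ i, ∃ tv : ℝ, ((σ i - ε : ℝ) : EReal) < ((s i * tv : ℝ) : EReal) - ψ tv := by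
      intro i
      have : ((σ i - ε : ℝ) : EReal) < T i := by
        rw [hσ i, EReal.coe_lt_coe_iff]
        linarith
      rw [hT_def] at this
      exact lt_iSup_iff.1 this
    choose tv htv using hchoice
    have := htuple tv
    have hlow : ((∑ i, (σ i - ε) : ℝ) : EReal) ≤ ∑ i, (((s i * tv i : ℝ) : EReal) - ψ (tv i)) := by
      rw [ecoe_sum]
      exact Finset.sum_le_sum fun i _ => (htv i).le
    have hfin := le_trans hlow this
    rw [EReal.coe_le_coe_iff] at hfin
    rw [Finset.sum_sub_distrib, Finset.sum_const, Finset.card_univ, Fintype.card_fin,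
      nsmul_eq_mul] at hfin
    have : (n : ℝ) * ε = ((∑ i, σ i) - M) / 2 := by
      rw [hε_def]; field_simp
    linarith
  refine ⟨η, ?_⟩
  have hdual_eq : dualF lam ℓ ψ η = (((lam / n) * (∑ i, σ i) + η : ℝ) : EReal) := by
    rw [dualF]
    rw [show (∑ i, (⨆ t : ℝ, ((((ℓ i - η) / lam) * t : ℝ) : EReal) - ψ t)) = ∑ i, T i from
      Finset.sum_congr rfl fun i _ => rfl]
    rw [show ∑ i, T i = ((∑ i, σ i : ℝ) : EReal) by
      rw [ecoe_sum]; exact Finset.sum_congr rfl fun i _ => hσ i]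
    rw [← EReal.coe_mul, ← EReal.coe_add]
  rw [hdual_eq, EReal.coe_le_coe_iff]
  have hMc : (lam / n) * M + η = c := by
    rw [hM_def]; field_simp; ring
  nlinarith [mul_le_mul_of_nonneg_left hσsum hk.le]

private lemma psi_ne_bot (ψ : ℝ → EReal)
    (hconv : ∀ a b t : ℝ, 0 ≤ t → t ≤ 1 →
      ψ (t * a + (1 - t) * b) ≤ (t : EReal) * ψ a + ((1 - t : ℝ) : EReal) * ψ b)
    (hlsc : LowerSemicontinuous ψ) (hone : ψ 1 = 0) :
    ∀ t : ℝ, ψ t ≠ ⊥ := by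
  intro a ha
  have key : ∀ s : ℝ, 0 < s → s ≤ 1 → ψ (s * a + (1 - s)) = ⊥ := by
    intro s hs hs1
    have := hconv a 1 s hs.le hs1
    rw [ha, hone, mul_zero, add_zero, mul_one] at this
    have hsb : (s : EReal) * (⊥ : EReal) = ⊥ := by
      rw [EReal.mul_comm, EReal.bot_mul_of_pos (by exact_mod_cast hs)]
    rw [hsb] at this
    exact le_bot_iff.1 this
  have h0 : (⊥ : EReal) < ψ 1 := by rw [hone, ← EReal.coe_zero]; exact EReal.bot_lt_coe 0
  obtain ⟨ε, hε, hball⟩ := Metric.eventually_nhds_iff.1 (hlsc 1 ⊥ h0)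
  set s : ℝ := min 1 (ε / (2 * (|a - 1| + 1))) with hs_def
  have hden : 0 < |a - 1| + 1 := by positivity
  have hspos : 0 < s := lt_min one_pos (by positivity)
  have hs1 : s ≤ 1 := min_le_left _ _
  have hdist : dist (s * a + (1 - s)) 1 < ε := by
    have : s * a + (1 - s) - 1 = s * (a - 1) := by ring
    rw [Real.dist_eq, this, abs_mul, abs_of_pos hspos]
    have h2 : s ≤ ε / (2 * (|a - 1| + 1)) := min_le_right _ _
    have : s * |a - 1| ≤ ε / (2 * (|a - 1| + 1)) * |a - 1| :=
      mul_le_mul_of_nonneg_right h2 (abs_nonneg _)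
    have hlt : ε / (2 * (|a - 1| + 1)) * |a - 1| < ε := by
      rw [div_mul_eq_mul_div, div_lt_iff₀ (by positivity)]
      nlinarith [abs_nonneg (a - 1)]
    linarith
  have : ψ (s * a + (1 - s)) > ⊥ := hball hdist
  rw [key s hspos hs1] at this
  exact lt_irrefl _ this

private lemma h_sub_le (a b : ℝ) (x : EReal) (h : (a : EReal) - x ≤ (b : EReal)) :
    ((a - b : ℝ) : EReal) ≤ x := by
  induction x using EReal.rec with
  | bot => rw [EReal.coe_sub_bot] at h; exact absurd h (by simp)
  | coe r =>
      rw [← EReal.coe_sub, EReal.coe_le_coe_iff] at h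
      rw [EReal.coe_le_coe_iff]; linarith
  | top => exact le_top

private lemma weak_duality {n : ℕ} (hn : 0 < n) (lam : ℝ) (hlam : 0 < lam) (ℓ : Fin n → ℝ)
    (ψ : ℝ → EReal) (hψbot : ∀ t, ψ t ≠ ⊥) (hone : ψ 1 = 0)
    (p : Fin n → ℝ) (hp0 : ∀ i, 0 ≤ p i) (hp1 : ∑ i, p i = 1) (η : ℝ) :
    objF lam ℓ ψ p ≤ dualF lam ℓ ψ η := by
  have hnR : (0:ℝ) < n := Nat.cast_pos.2 hn
  have hk : (0:ℝ) < lam / n := div_pos hlam hnR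
  set s : Fin n → ℝ := fun i => (ℓ i - η) / lam with hs_def
  set S : Fin n → EReal := fun i => ⨆ t : ℝ, ((s i * t : ℝ) : EReal) - ψ t with hS_def
  have hSlb : ∀ i, ((s i : ℝ) : EReal) ≤ S i := by
    intro i
    have := le_iSup (fun t : ℝ => ((s i * t : ℝ) : EReal) - ψ t) 1
    rw [mul_one, hone] at this
    simpa [hS_def] using this
  have hSbot : ∀ i, S i ≠ ⊥ := fun i =>
    ((EReal.bot_lt_coe (s i)).trans_le (hSlb i)).ne'
  by_cases htop : ∃ i0, S i0 = ⊤
  · obtain ⟨i0, hi0⟩ := htop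
    have : dualF lam ℓ ψ η = ⊤ := by
      rw [dualF, esum_eq_top S hSbot i0 hi0, EReal.coe_mul_top_of_pos hk, EReal.top_add_coe]
    rw [this]; exact le_top
  · push_neg at htop
    choose σ hσ using fun i => ereal_exists_real (S i) (hSbot i) (htop i)
    have hkey : ∀ i, ((s i * ((n:ℝ) * p i) - σ i : ℝ) : EReal) ≤ ψ ((n:ℝ) * p i) := by
      intro i
      refine h_sub_le _ _ _ ?_
      rw [← hσ i]
      exact le_iSup (fun t : ℝ => ((s i * t : ℝ) : EReal) - ψ t) ((n:ℝ) * p i)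
    have hsum : ((∑ i, (s i * ((n:ℝ) * p i) - σ i) : ℝ) : EReal) ≤ ∑ i, ψ ((n:ℝ) * p i) := by
      rw [ecoe_sum]
      exact Finset.sum_le_sum fun i _ => hkey i
    set G : EReal := ∑ i, ψ ((n:ℝ) * p i) with hG_def
    have hGbot : G ≠ ⊥ := esum_ne_bot _ fun i => hψbot _
    have hdual : dualF lam ℓ ψ η = (((lam/n) * (∑ i, σ i) + η : ℝ) : EReal) := by
      rw [dualF, show ∑ i, (⨆ t : ℝ, ((((ℓ i - η) / lam) * t : ℝ) : EReal) - ψ t) = ∑ i, S i from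
        Finset.sum_congr rfl fun i _ => rfl,
        show ∑ i, S i = ((∑ i, σ i : ℝ) : EReal) by
          rw [ecoe_sum]; exact Finset.sum_congr rfl fun i _ => hσ i]
      rw [← EReal.coe_mul, ← EReal.coe_add]
    rw [hdual, objF, ← hG_def]
    by_cases hGtop : G = ⊤
    · rw [hGtop, EReal.coe_mul_top_of_pos hk, EReal.sub_top]
      exact bot_le
    · obtain ⟨gr, hgr⟩ := ereal_exists_real G hGbot hGtop
      rw [hgr, EReal.coe_le_coe_iff] at hsum
      rw [hgr, ← EReal.coe_mul, ← EReal.coe_sub, EReal.coe_le_coe_iff]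
      have hterm : ∀ i, (lam/n) * (s i * ((n:ℝ) * p i)) = p i * ℓ i - η * p i := by
        intro i
        rw [hs_def]
        field_simp
      have hBsplit : ∑ i, (s i * ((n:ℝ) * p i) - σ i)
          = ∑ i, s i * ((n:ℝ) * p i) - ∑ i, σ i := Finset.sum_sub_distrib _ _
      have hkB : (lam/n) * ∑ i, s i * ((n:ℝ) * p i) = ∑ i, p i * ℓ i - η := by
        rw [Finset.mul_sum]
        rw [Finset.sum_congr rfl fun i _ => hterm i, Finset.sum_sub_distrib,
          ← Finset.mul_sum, hp1, mul_one]
      have hmul : (lam/n) * (∑ i, s i * ((n:ℝ) * p i) - ∑ i, σ i) ≤ (lam/n) * gr := by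
        apply mul_le_mul_of_nonneg_left _ hk.le
        rw [← hBsplit]; exact hsum
      rw [mul_sub] at hmul
      linarith

private lemma final_eq {n : ℕ} (hn : 0 < n) (lam : ℝ) (hlam : 0 < lam) (ℓ : Fin n → ℝ)
    (ψ : ℝ → EReal)
    (hconv : ∀ a b t : ℝ, 0 ≤ t → t ≤ 1 →
      ψ (t * a + (1 - t) * b) ≤ (t : EReal) * ψ a + ((1 - t : ℝ) : EReal) * ψ b)
    (hlsc : LowerSemicontinuous ψ) (hone : ψ 1 = 0)
    (hneg : ∀ t : ℝ, t < 0 → ψ t = ⊤) :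
    (⨆ p ∈ {p : Fin n → ℝ | (∀ i, 0 ≤ p i) ∧ (∑ i, p i) = 1}, objF lam ℓ ψ p)
      = ⨅ η : ℝ, dualF lam ℓ ψ η := by
  have hψbot := psi_ne_bot ψ hconv hlsc hone
  have hnR : (0:ℝ) < n := Nat.cast_pos.2 hn
  set P : EReal := ⨆ p ∈ {p : Fin n → ℝ | (∀ i, 0 ≤ p i) ∧ (∑ i, p i) = 1},
    objF lam ℓ ψ p with hP_def
  have hub : ∀ p : Fin n → ℝ, (∀ i, 0 ≤ p i) → (∑ i, p i) = 1 → objF lam ℓ ψ p ≤ P := by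
    intro p hp0 hp1
    exact le_iSup₂ (f := fun (p : Fin n → ℝ) (_ : p ∈ {p : Fin n → ℝ |
      (∀ i, 0 ≤ p i) ∧ (∑ i, p i) = 1}) => objF lam ℓ ψ p) p ⟨hp0, hp1⟩
  have hunif_sum : ∑ _i : Fin n, (1 / n : ℝ) = 1 := by
    rw [Finset.sum_const, Finset.card_univ, Fintype.card_fin, nsmul_eq_mul]
    field_simp
  have hPlb : ((∑ i, (1 / n : ℝ) * ℓ i : ℝ) : EReal) ≤ P := by
    rw [← obj_unif hn lam ℓ ψ hone]
    exact hub _ (fun i => by positivity) hunif_sum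
  refine le_antisymm ?_ ?_
  · refine iSup₂_le fun p hp => le_iInf fun η => ?_
    exact weak_duality hn lam hlam ℓ ψ hψbot hone p hp.1 hp.2 η
  · by_cases hPtop : P = ⊤
    · rw [hPtop]; exact le_top
    · have hPbot : P ≠ ⊥ := ((EReal.bot_lt_coe _).trans_le hPlb).ne'
      obtain ⟨Pr, hPr⟩ := ereal_exists_real P hPbot hPtop
      rw [hPr]
      by_contra hcon
      push_neg at hcon
      obtain ⟨cr, hcr1, hcr2⟩ := EReal.exists_between_coe_real hcon
      have hc : Pr < cr := by exact_mod_cast hcr1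
      obtain ⟨η, hη⟩ := strong_duality hn lam hlam ℓ ψ hconv hψbot hlsc hone hneg Pr cr
        (fun p h0 h1 => by rw [← hPr]; exact hub p h0 h1) hc
      have h6 : (⨅ η : ℝ, dualF lam ℓ ψ η) ≤ (cr : EReal) := le_trans (iInf_le _ η) hη
      exact absurd (h6.trans_lt hcr2) (lt_irrefl _)


/-- Primal–dual equivalence for penalized ψ-divergence DRO (Equation (4)): for a convex,
lower semicontinuous `ψ : ℝ → ℝ ∪ {+∞}` (modeled as `ψ : ℝ → EReal`) with `ψ(1) = 0` and
`ψ(t) = +∞` for `t < 0`, and conjugate `ψ*(s) = sup_t (st − ψ(t))`, for any `λ > 0` and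
`ℓ₁,…,ℓₙ ∈ ℝ`,
`sup_{p ∈ Δₙ} (∑ᵢ pᵢℓᵢ − (λ/n) ∑ᵢ ψ(n pᵢ)) = inf_{η ∈ ℝ} ((λ/n) ∑ᵢ ψ*((ℓᵢ − η)/λ) + η)`,
both sides taken in the extended reals. -/
theorem stmt10
    {n : ℕ} (hn : 0 < n) (lam : ℝ) (hlam : 0 < lam) (ℓ : Fin n → ℝ)
    (ψ : ℝ → EReal)
    (hconv : ∀ a b t : ℝ, 0 ≤ t → t ≤ 1 →
      ψ (t * a + (1 - t) * b) ≤ (t : EReal) * ψ a + ((1 - t : ℝ) : EReal) * ψ b)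
    (hlsc : LowerSemicontinuous ψ)
    (hone : ψ 1 = 0)
    (hneg : ∀ t : ℝ, t < 0 → ψ t = ⊤) :
    (⨆ p ∈ {p : Fin n → ℝ | (∀ i, 0 ≤ p i) ∧ (∑ i, p i) = 1},
        ((∑ i, p i * ℓ i : ℝ) : EReal) - ((lam / n : ℝ) : EReal) * ∑ i, ψ ((n : ℝ) * p i))
      = ⨅ η : ℝ,
          (((lam / n : ℝ) : EReal) *
              ∑ i, (⨆ t : ℝ, ((((ℓ i - η) / lam) * t : ℝ) : EReal) - ψ t)
            + (η : EReal)) :=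
  final_eq hn lam hlam ℓ ψ hconv hlsc hone hneg
end

section
/- Dual representation of KL-constrained DRO (Equation (5)): For any ρ > 0 and any ℓ₁,…,ℓₙ ∈ ℝ, the maximum of Σᵢ pᵢ ℓᵢ over all p ∈ Δₙ with Σᵢ pᵢ log(n pᵢ) ≤ ρ equals inf over λ > 0 of (λ log((1/n) Σᵢ exp(ℓᵢ/λ)) + λρ). -/
open Finset Real

lemma per_term_ineq (n : ℕ) (hn : 0 < n) (T a pi : ℝ) (hT : 0 < T) (hpi : 0 ≤ pi) :
    pi * a - pi * Real.log ((n : ℝ) * pi) - pi * Real.log T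
      ≤ Real.exp a / ((n : ℝ) * T) - pi := by
  have hn' : (0:ℝ) < n := by exact_mod_cast hn
  rcases hpi.eq_or_lt with h0 | hpos
  · rw [← h0]
    simp
    positivity
  · have hu : 0 < Real.exp a / ((n:ℝ) * pi * T) := by positivity
    have hlog := Real.log_le_sub_one_of_pos hu
    have hlogeq : Real.log (Real.exp a / ((n:ℝ) * pi * T))
        = a - (Real.log ((n:ℝ)*pi) + Real.log T) := by
      rw [Real.log_div (Real.exp_ne_zero a) (by positivity), Real.log_exp,
        Real.log_mul (by positivity) hT.ne']
    rw [hlogeq] at hlog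
    have h2 := mul_le_mul_of_nonneg_left hlog hpos.le
    have hrw : pi * (Real.exp a / ((n:ℝ)*pi*T) - 1) = Real.exp a / ((n:ℝ)*T) - pi := by
      field_simp
    nlinarith [h2, hrw]

lemma weak_dual (n : ℕ) (hn : 0 < n) (ℓ p : Fin n → ℝ) (hp : ∀ i, 0 ≤ p i)
    (hs : ∑ i, p i = 1) (lam : ℝ) (hlam : 0 < lam) :
    ∑ i, p i * ℓ i ≤ lam * Real.log ((1 / (n:ℝ)) * ∑ i, Real.exp (ℓ i / lam))
      + lam * ∑ i, p i * Real.log ((n:ℝ) * p i) := by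
  have hn' : (0:ℝ) < n := by exact_mod_cast hn
  set T := (1 / (n:ℝ)) * ∑ i, Real.exp (ℓ i / lam) with hTdef
  have hT : 0 < T := by
    have : 0 < ∑ i, Real.exp (ℓ i / lam) :=
      Finset.sum_pos (fun i _ => Real.exp_pos _) ⟨⟨0, hn⟩, Finset.mem_univ _⟩
    positivity
  have hsum : ∑ i, (p i * (ℓ i / lam) - p i * Real.log ((n:ℝ) * p i) - p i * Real.log T)
      ≤ ∑ i, (Real.exp (ℓ i / lam) / ((n:ℝ) * T) - p i) :=
    Finset.sum_le_sum fun i _ => per_term_ineq n hn T (ℓ i / lam) (p i) hT (hp i)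
  rw [Finset.sum_sub_distrib, Finset.sum_sub_distrib, Finset.sum_sub_distrib,
    ← Finset.sum_mul, hs, ← Finset.sum_div] at hsum
  have hone : (∑ i, Real.exp (ℓ i / lam)) / ((n:ℝ) * T) = 1 := by
    rw [hTdef]
    have hZ : (∑ i, Real.exp (ℓ i / lam)) ≠ 0 :=
      (Finset.sum_pos (fun i _ => Real.exp_pos _) ⟨⟨0, hn⟩, Finset.mem_univ _⟩).ne'
    field_simp
  rw [hone] at hsum
  -- now hsum : ∑ p i * (ℓ i/lam) - ∑ p i * log(n p i) - 1 * log T ≤ 1 - 1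
  have key : ∑ i, p i * (ℓ i / lam) ≤ Real.log T + ∑ i, p i * Real.log ((n:ℝ) * p i) := by
    linarith
  have := mul_le_mul_of_nonneg_left key hlam.le
  have hrw : lam * ∑ i, p i * (ℓ i / lam) = ∑ i, p i * ℓ i := by
    rw [Finset.mul_sum]
    congr 1; ext i; field_simp
  rw [hrw, mul_add] at this
  linarith


lemma gibbs_sum (n : ℕ) (hn : 0 < n) (ℓ : Fin n → ℝ) (lam : ℝ) :
    ∑ i, Real.exp (ℓ i / lam) / (∑ j, Real.exp (ℓ j / lam)) = 1 := by
  have hZ : (0:ℝ) < ∑ j, Real.exp (ℓ j / lam) :=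
    Finset.sum_pos (fun i _ => Real.exp_pos _) ⟨⟨0, hn⟩, Finset.mem_univ _⟩
  rw [← Finset.sum_div, div_self hZ.ne']

lemma gibbs_log (n : ℕ) (hn : 0 < n) (ℓ : Fin n → ℝ) (lam : ℝ) (i : Fin n) :
    Real.log ((n:ℝ) * (Real.exp (ℓ i / lam) / (∑ j, Real.exp (ℓ j / lam))))
      = ℓ i / lam + (Real.log n - Real.log (∑ j, Real.exp (ℓ j / lam))) := by
  have hn' : (0:ℝ) < n := by exact_mod_cast hn
  have hZ : (0:ℝ) < ∑ j, Real.exp (ℓ j / lam) :=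
    Finset.sum_pos (fun i _ => Real.exp_pos _) ⟨⟨0, hn⟩, Finset.mem_univ _⟩
  rw [Real.log_mul hn'.ne' (by positivity), Real.log_div (Real.exp_ne_zero _) hZ.ne',
    Real.log_exp]
  ring

lemma gibbs_kl (n : ℕ) (hn : 0 < n) (ℓ : Fin n → ℝ) (lam : ℝ) :
    ∑ i, (Real.exp (ℓ i / lam) / (∑ j, Real.exp (ℓ j / lam))) *
        Real.log ((n:ℝ) * (Real.exp (ℓ i / lam) / (∑ j, Real.exp (ℓ j / lam))))
      = (∑ i, (Real.exp (ℓ i / lam) / (∑ j, Real.exp (ℓ j / lam))) * ℓ i) / lam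
        + (Real.log n - Real.log (∑ j, Real.exp (ℓ j / lam))) := by
  have h1 : ∀ i : Fin n, (Real.exp (ℓ i / lam) / (∑ j, Real.exp (ℓ j / lam))) *
        Real.log ((n:ℝ) * (Real.exp (ℓ i / lam) / (∑ j, Real.exp (ℓ j / lam))))
      = (Real.exp (ℓ i / lam) / (∑ j, Real.exp (ℓ j / lam))) * ℓ i / lam
        + (Real.exp (ℓ i / lam) / (∑ j, Real.exp (ℓ j / lam))) *
          (Real.log n - Real.log (∑ j, Real.exp (ℓ j / lam))) := by
    intro i
    rw [gibbs_log n hn ℓ lam i]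
    ring
  rw [Finset.sum_congr rfl (fun i _ => h1 i), Finset.sum_add_distrib, ← Finset.sum_mul,
    gibbs_sum n hn ℓ lam, one_mul, Finset.sum_div]

lemma gibbs_id (n : ℕ) (hn : 0 < n) (ℓ : Fin n → ℝ) (lam : ℝ) (hlam : 0 < lam) :
    lam * Real.log ((1 / (n:ℝ)) * ∑ i, Real.exp (ℓ i / lam))
      = (∑ i, (Real.exp (ℓ i / lam) / (∑ j, Real.exp (ℓ j / lam))) * ℓ i)
        - lam * ∑ i, (Real.exp (ℓ i / lam) / (∑ j, Real.exp (ℓ j / lam))) *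
            Real.log ((n:ℝ) * (Real.exp (ℓ i / lam) / (∑ j, Real.exp (ℓ j / lam)))) := by
  have hn' : (0:ℝ) < n := by exact_mod_cast hn
  have hZ : (0:ℝ) < ∑ j, Real.exp (ℓ j / lam) :=
    Finset.sum_pos (fun i _ => Real.exp_pos _) ⟨⟨0, hn⟩, Finset.mem_univ _⟩
  rw [gibbs_kl n hn ℓ lam, Real.log_mul (by positivity) hZ.ne', Real.log_div one_ne_zero hn'.ne',
    Real.log_one]
  field_simp
  ring

lemma gibbs_kl_nonneg (n : ℕ) (hn : 0 < n) (ℓ : Fin n → ℝ) (lam : ℝ) :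
    0 ≤ ∑ i, (Real.exp (ℓ i / lam) / (∑ j, Real.exp (ℓ j / lam))) *
        Real.log ((n:ℝ) * (Real.exp (ℓ i / lam) / (∑ j, Real.exp (ℓ j / lam)))) := by
  have hn' : (0:ℝ) < n := by exact_mod_cast hn
  have hZ : (0:ℝ) < ∑ j, Real.exp (ℓ j / lam) :=
    Finset.sum_pos (fun i _ => Real.exp_pos _) ⟨⟨0, hn⟩, Finset.mem_univ _⟩
  have h1 : ∀ i : Fin n, (Real.exp (ℓ i / lam) / (∑ j, Real.exp (ℓ j / lam))) - 1/(n:ℝ)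
      ≤ (Real.exp (ℓ i / lam) / (∑ j, Real.exp (ℓ j / lam))) *
        Real.log ((n:ℝ) * (Real.exp (ℓ i / lam) / (∑ j, Real.exp (ℓ j / lam)))) := by
    intro i
    set q := Real.exp (ℓ i / lam) / (∑ j, Real.exp (ℓ j / lam)) with hq
    have hqpos : 0 < q := by positivity
    have hinv : 0 < 1 / ((n:ℝ) * q) := by positivity
    have := Real.log_le_sub_one_of_pos hinv
    rw [Real.log_div one_ne_zero (by positivity), Real.log_one] at this
    -- this : -log(n q) ≤ 1/(n q) - 1
    have h2 : 1 - 1/((n:ℝ)*q) ≤ Real.log ((n:ℝ)*q) := by linarith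
    have h3 := mul_le_mul_of_nonneg_left h2 hqpos.le
    have h4 : q * (1 - 1/((n:ℝ)*q)) = q - 1/(n:ℝ) := by field_simp
    linarith [h3, h4.symm.le]
  calc (0:ℝ) = ∑ i, ((Real.exp (ℓ i / lam) / (∑ j, Real.exp (ℓ j / lam))) - 1/(n:ℝ)) := by
        rw [Finset.sum_sub_distrib, gibbs_sum n hn ℓ lam, Finset.sum_const,
          Finset.card_univ, Fintype.card_fin]
        have hn' : (0:ℝ) < n := by exact_mod_cast hn
        rw [nsmul_eq_mul]
        field_simp
        ring
    _ ≤ _ := Finset.sum_le_sum fun i _ => h1 i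


lemma gibbs_kl_le (n : ℕ) (hn : 0 < n) (ℓ : Fin n → ℝ) (lam : ℝ) (hlam : 0 < lam)
    (M m : ℝ) (hM : ∀ i, ℓ i ≤ M) (hm : ∀ i, m ≤ ℓ i) :
    ∑ i, (Real.exp (ℓ i / lam) / (∑ j, Real.exp (ℓ j / lam))) *
        Real.log ((n:ℝ) * (Real.exp (ℓ i / lam) / (∑ j, Real.exp (ℓ j / lam))))
      ≤ (M - m) / lam := by
  have hn' : (0:ℝ) < n := by exact_mod_cast hn
  have hZ : (0:ℝ) < ∑ j, Real.exp (ℓ j / lam) :=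
    Finset.sum_pos (fun i _ => Real.exp_pos _) ⟨⟨0, hn⟩, Finset.mem_univ _⟩
  have hZlb : (n:ℝ) * Real.exp (m / lam) ≤ ∑ j, Real.exp (ℓ j / lam) := by
    calc (n:ℝ) * Real.exp (m / lam) = ∑ _j : Fin n, Real.exp (m / lam) := by
          rw [Finset.sum_const, Finset.card_univ, Fintype.card_fin, nsmul_eq_mul]
      _ ≤ _ := Finset.sum_le_sum fun j _ =>
          Real.exp_le_exp.mpr (by gcongr; exact hm j)
  have hlogZ : Real.log ((n:ℝ)) + m / lam ≤ Real.log (∑ j, Real.exp (ℓ j / lam)) := by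
    have := Real.log_le_log (by positivity) hZlb
    rwa [Real.log_mul hn'.ne' (Real.exp_ne_zero _), Real.log_exp] at this
  have h1 : ∀ i : Fin n, (Real.exp (ℓ i / lam) / (∑ j, Real.exp (ℓ j / lam))) *
        Real.log ((n:ℝ) * (Real.exp (ℓ i / lam) / (∑ j, Real.exp (ℓ j / lam))))
      ≤ (Real.exp (ℓ i / lam) / (∑ j, Real.exp (ℓ j / lam))) * ((M - m) / lam) := by
    intro i
    have hq : 0 ≤ Real.exp (ℓ i / lam) / (∑ j, Real.exp (ℓ j / lam)) := by positivity
    refine mul_le_mul_of_nonneg_left ?_ hq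
    rw [gibbs_log n hn ℓ lam i]
    have : ℓ i / lam ≤ M / lam := by gcongr; exact hM i
    have hmm : (M - m)/lam = M/lam - m/lam := by ring
    linarith
  calc _ ≤ ∑ i, (Real.exp (ℓ i / lam) / (∑ j, Real.exp (ℓ j / lam))) * ((M - m) / lam) :=
        Finset.sum_le_sum fun i _ => h1 i
    _ = (M - m) / lam := by rw [← Finset.sum_mul, gibbs_sum n hn ℓ lam, one_mul]

lemma gibbs_kl_cont (n : ℕ) (hn : 0 < n) (ℓ : Fin n → ℝ) :
    ContinuousOn (fun lam => ∑ i, (Real.exp (ℓ i / lam) / (∑ j, Real.exp (ℓ j / lam))) *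
        Real.log ((n:ℝ) * (Real.exp (ℓ i / lam) / (∑ j, Real.exp (ℓ j / lam)))))
      (Set.Ioi (0:ℝ)) := by
  have hn' : (0:ℝ) < n := by exact_mod_cast hn
  have he : ∀ c : ℝ, ContinuousOn (fun lam : ℝ => Real.exp (c / lam)) (Set.Ioi 0) :=
    fun c => Real.continuous_exp.comp_continuousOn
      (continuousOn_const.div continuousOn_id (fun x hx => ne_of_gt hx))
  have hZc : ContinuousOn (fun lam : ℝ => ∑ j, Real.exp (ℓ j / lam)) (Set.Ioi 0) :=
    continuousOn_finset_sum _ fun j _ => he (ℓ j)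
  have hZne : ∀ lam ∈ Set.Ioi (0:ℝ), (∑ j, Real.exp (ℓ j / lam)) ≠ 0 :=
    fun lam _ => (Finset.sum_pos (fun i _ => Real.exp_pos _) ⟨⟨0, hn⟩, Finset.mem_univ _⟩).ne'
  have hqc : ∀ i : Fin n, ContinuousOn
      (fun lam : ℝ => Real.exp (ℓ i / lam) / (∑ j, Real.exp (ℓ j / lam))) (Set.Ioi 0) :=
    fun i => (he (ℓ i)).div hZc hZne
  refine continuousOn_finset_sum _ fun i _ => (hqc i).mul (ContinuousOn.log
      (continuousOn_const.mul (hqc i)) ?_)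
  intro lam hlam
  have : 0 < Real.exp (ℓ i / lam) / (∑ j, Real.exp (ℓ j / lam)) := by
    have hZ : (0:ℝ) < ∑ j, Real.exp (ℓ j / lam) :=
      Finset.sum_pos (fun i _ => Real.exp_pos _) ⟨⟨0, hn⟩, Finset.mem_univ _⟩
    positivity
  positivity


/-- Dual representation of KL-constrained DRO (Equation (5)): for `ρ > 0` and
`ℓ₁,…,ℓₙ ∈ ℝ`, the maximum of `∑ᵢ pᵢℓᵢ` over all `p` in the simplex with
`∑ᵢ pᵢ log(n pᵢ) ≤ ρ` equals the infimum over `λ > 0` of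
`λ log((1/n) ∑ᵢ exp(ℓᵢ/λ)) + λρ`.  (Terms `pᵢ log(n pᵢ)` with `pᵢ = 0` vanish,
consistently with `Real.log 0 = 0`.) -/
theorem stmt11
    {n : ℕ} (hn : 0 < n) (ρ : ℝ) (hρ : 0 < ρ) (ℓ : Fin n → ℝ) :
    sSup {v : ℝ | ∃ p : Fin n → ℝ, (∀ i, 0 ≤ p i) ∧ (∑ i, p i) = 1 ∧
            (∑ i, p i * Real.log ((n : ℝ) * p i)) ≤ ρ ∧ v = ∑ i, p i * ℓ i}
      = sInf {v : ℝ | ∃ lam : ℝ, 0 < lam ∧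
            v = lam * Real.log ((1 / (n : ℝ)) * ∑ i, Real.exp (ℓ i / lam)) + lam * ρ} := by
  have hn' : (0:ℝ) < n := by exact_mod_cast hn
  set S := {v : ℝ | ∃ p : Fin n → ℝ, (∀ i, 0 ≤ p i) ∧ (∑ i, p i) = 1 ∧
      (∑ i, p i * Real.log ((n : ℝ) * p i)) ≤ ρ ∧ v = ∑ i, p i * ℓ i} with hSdef
  set D := {v : ℝ | ∃ lam : ℝ, 0 < lam ∧
      v = lam * Real.log ((1 / (n : ℝ)) * ∑ i, Real.exp (ℓ i / lam)) + lam * ρ} with hDdef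
  -- S is nonempty (uniform distribution)
  have hSne : S.Nonempty := by
    refine ⟨∑ i, (1/(n:ℝ)) * ℓ i, fun _ => 1/(n:ℝ), fun i => by positivity, ?_, ?_, rfl⟩
    · rw [Finset.sum_const, Finset.card_univ, Fintype.card_fin, nsmul_eq_mul]
      field_simp
    · have : ∀ i : Fin n, (1/(n:ℝ)) * Real.log ((n:ℝ) * (1/((n:ℝ)))) = 0 := by
        intro i
        rw [mul_one_div, div_self hn'.ne', Real.log_one, mul_zero]
      rw [Finset.sum_congr rfl fun i _ => this i]
      simp [hρ.le]
  have hDne : D.Nonempty := ⟨_, 1, one_pos, rfl⟩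
  -- weak duality
  have hweak : ∀ v ∈ S, ∀ w ∈ D, v ≤ w := by
    rintro v ⟨p, hp, hs, hkl, rfl⟩ w ⟨lam, hlam, rfl⟩
    have h1 := weak_dual n hn ℓ p hp hs lam hlam
    have h2 : lam * ∑ i, p i * Real.log ((n:ℝ) * p i) ≤ lam * ρ :=
      mul_le_mul_of_nonneg_left hkl hlam.le
    linarith
  obtain ⟨d₀, hd₀⟩ := hDne
  obtain ⟨s₀, hs₀⟩ := hSne
  have hbddS : BddAbove S := ⟨d₀, fun v hv => hweak v hv d₀ hd₀⟩
  have hbddD : BddBelow D := ⟨s₀, fun w hw => hweak s₀ hs₀ w hw⟩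
  have hle1 : sSup S ≤ sInf D :=
    csSup_le ⟨s₀, hs₀⟩ fun v hv => le_csInf ⟨d₀, hd₀⟩ fun w hw => hweak v hv w hw
  refine le_antisymm hle1 ?_
  -- notation for the KL divergence of the Gibbs distribution
  set g : ℝ → ℝ := fun lam => ∑ i, (Real.exp (ℓ i / lam) / (∑ j, Real.exp (ℓ j / lam))) *
      Real.log ((n:ℝ) * (Real.exp (ℓ i / lam) / (∑ j, Real.exp (ℓ j / lam)))) with hgdef
  -- for any lam > 0 with g lam ≤ ρ, the Gibbs value is in S and equals the dual value minus slack
  have hfD : ∀ lam : ℝ, 0 < lam →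
      lam * Real.log ((1 / (n:ℝ)) * ∑ i, Real.exp (ℓ i / lam)) + lam * ρ ∈ D :=
    fun lam hlam => ⟨lam, hlam, rfl⟩
  have hvS : ∀ lam : ℝ, 0 < lam → g lam ≤ ρ →
      (∑ i, (Real.exp (ℓ i / lam) / (∑ j, Real.exp (ℓ j / lam))) * ℓ i) ∈ S := by
    intro lam hlam hg
    refine ⟨fun i => Real.exp (ℓ i / lam) / (∑ j, Real.exp (ℓ j / lam)), ?_, ?_, hg, rfl⟩
    · intro i
      have hZ : (0:ℝ) < ∑ j, Real.exp (ℓ j / lam) :=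
        Finset.sum_pos (fun i _ => Real.exp_pos _) ⟨⟨0, hn⟩, Finset.mem_univ _⟩
      positivity
    · exact gibbs_sum n hn ℓ lam
  have hfval : ∀ lam : ℝ, 0 < lam →
      lam * Real.log ((1 / (n:ℝ)) * ∑ i, Real.exp (ℓ i / lam)) + lam * ρ
        = (∑ i, (Real.exp (ℓ i / lam) / (∑ j, Real.exp (ℓ j / lam))) * ℓ i)
          + lam * (ρ - g lam) := by
    intro lam hlam
    have := gibbs_id n hn ℓ lam hlam
    rw [hgdef]
    linarith [this]
  -- bounds on max/min of ℓ
  set M : ℝ := Finset.univ.sup' ⟨⟨0, hn⟩, Finset.mem_univ _⟩ ℓ with hMdef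
  set m : ℝ := Finset.univ.inf' ⟨⟨0, hn⟩, Finset.mem_univ _⟩ ℓ with hmdef
  have hM : ∀ i, ℓ i ≤ M := fun i => Finset.le_sup' ℓ (Finset.mem_univ i)
  have hm : ∀ i, m ≤ ℓ i := fun i => Finset.inf'_le ℓ (Finset.mem_univ i)
  have hmM : m ≤ M := (hm ⟨0, hn⟩).trans (hM ⟨0, hn⟩)
  -- a point where g is below ρ
  set lam₁ : ℝ := (M - m) / ρ + 1 with hlam₁def
  have hlam₁ : 0 < lam₁ := by
    have h0 : 0 ≤ (M - m) / ρ := div_nonneg (by linarith) hρ.le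
    rw [hlam₁def]
    linarith
  have hglam₁ : g lam₁ < ρ := by
    have h1 : g lam₁ ≤ (M - m) / lam₁ := gibbs_kl_le n hn ℓ lam₁ hlam₁ M m hM hm
    have h2 : (M - m) / lam₁ < ρ := by
      rw [div_lt_iff₀ hlam₁]
      have : ρ * lam₁ = (M - m) + ρ := by
        rw [hlam₁def]; field_simp
      nlinarith
    linarith
  by_cases hcase : ∃ lam : ℝ, 0 < lam ∧ ρ < g lam
  · -- IVT case: find lam* with g lam* = ρ
    obtain ⟨lam', hlam', hglam'⟩ := hcase
    have hsub : Set.uIcc lam₁ lam' ⊆ Set.Ioi (0:ℝ) := by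
      intro x hx
      have h1 : min lam₁ lam' ≤ x := hx.1
      exact lt_of_lt_of_le (lt_min hlam₁ hlam') h1
    have hcont : ContinuousOn g (Set.uIcc lam₁ lam') :=
      (gibbs_kl_cont n hn ℓ).mono hsub
    have hmemρ : ρ ∈ Set.uIcc (g lam₁) (g lam') :=
      Set.mem_uIcc.mpr (Or.inl ⟨hglam₁.le, hglam'.le⟩)
    obtain ⟨lam', hmem, hgeq⟩ := intermediate_value_uIcc hcont hmemρ
    have hpos : 0 < lam' := hsub hmem
    have hvmem := hvS lam' hpos hgeq.le
    have hfmem := hfD lam' hpos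
    have heq := hfval lam' hpos
    rw [hgeq, sub_self, mul_zero, add_zero] at heq
    calc sInf D ≤ _ := csInf_le hbddD hfmem
      _ = _ := heq
      _ ≤ sSup S := le_csSup hbddS hvmem
  · -- all Gibbs distributions feasible
    push_neg at hcase
    have key : ∀ ε : ℝ, 0 < ε → sInf D ≤ sSup S + ε := by
      intro ε hε
      set lam : ℝ := ε / ρ with hlamdef
      have hlam : 0 < lam := by positivity
      have hg := hcase lam hlam
      have hg0 := gibbs_kl_nonneg n hn ℓ lam
      have hvmem := hvS lam hlam hg
      have hfmem := hfD lam hlam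
      have heq := hfval lam hlam
      have h1 : sInf D ≤ (∑ i, (Real.exp (ℓ i / lam) / (∑ j, Real.exp (ℓ j / lam))) * ℓ i)
          + lam * (ρ - g lam) := heq ▸ csInf_le hbddD hfmem
      have h2 : (∑ i, (Real.exp (ℓ i / lam) / (∑ j, Real.exp (ℓ j / lam))) * ℓ i)
          ≤ sSup S := le_csSup hbddS hvmem
      have hg0' : 0 ≤ g lam := hg0
      have h3 : lam * (ρ - g lam) ≤ lam * ρ := by
        have : ρ - g lam ≤ ρ := by linarith
        exact mul_le_mul_of_nonneg_left this hlam.le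
      have h4 : lam * ρ = ε := by rw [hlamdef]; field_simp
      linarith
    exact le_of_forall_pos_le_add key
end

section
/- Convex conjugate of the Cressie–Read family generator (Table 1, Cressie–Read row): Fix a real k > 1 and let ψ(t) = (t^k − kt + k − 1)/(k(k − 1)) for t ≥ 0 and ψ(t) = +∞ for t < 0. Then its convex conjugate satisfies ψ*(s) = (1/k)((max((k − 1)s + 1, 0))^{k/(k−1)} − 1) for all s ∈ ℝ. -/
/-!
With `a = (k - 1) s + 1` one has `s t - ψ(t) = (a t - t^k / k) / (k - 1) - 1 / k` for `t ≥ 0`,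
so `ψ*` is an affine image of the conjugate of `t ↦ t^k / k` on `[0, ∞)`. By Young's inequality
with the conjugate exponent `q = k / (k - 1)`, that conjugate is `(max a 0)^q / q`, attained at
`t = (max a 0)^(q - 1)`.
-/

namespace Real

variable {p q : ℝ}

theorem mul_sub_rpow_div_le (hpq : p.HolderConjugate q) (a : ℝ) {t : ℝ} (ht : 0 ≤ t) :
    a * t - t ^ p / p ≤ max a 0 ^ q / q := by
  have hyoung := young_inequality_of_nonneg ht (le_max_right a 0) hpq
  nlinarith [mul_le_mul_of_nonneg_right (le_max_left a 0) ht]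

theorem mul_rpow_sub_one_sub_rpow_div (hpq : p.HolderConjugate q) (a : ℝ) :
    a * max a 0 ^ (q - 1) - (max a 0 ^ (q - 1)) ^ p / p = max a 0 ^ q / q := by
  set c := max a 0
  have hc : 0 ≤ c := le_max_right a 0
  have hlin : a * c ^ (q - 1) = c ^ q := by
    rcases le_total a 0 with ha | ha
    · have hc0 : c = 0 := max_eq_right ha
      rw [hc0, zero_rpow hpq.symm.sub_one_ne_zero, zero_rpow hpq.symm.ne_zero, mul_zero]
    · rw [show c = a from max_eq_left ha]
      conv_rhs => rw [← add_sub_cancel 1 q, rpow_add' ha (by simpa using hpq.symm.ne_zero),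
        rpow_one]
  rw [hlin, ← rpow_mul hc, hpq.symm.sub_one_mul_conj, div_eq_mul_inv, div_eq_mul_inv,
    ← hpq.one_sub_inv]
  ring

end Real

theorem cressieRead_conj_sub_eq {k : ℝ} (hk : 1 < k) (s t M : ℝ) :
    s * t - (t ^ k - k * t + k - 1) / (k * (k - 1)) - 1 / k * (M - 1)
      = (((k - 1) * s + 1) * t - t ^ k / k - M / (k / (k - 1))) / (k - 1) := by
  have hk0 : k ≠ 0 := by positivity
  have hk1 : k - 1 ≠ 0 := sub_ne_zero.2 hk.ne'
  field_simp
  ring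

/-- Convex conjugate of the Cressie–Read family generator (Table 1, Cressie–Read row): fix
`k > 1` and let `ψ(t) = (t^k − kt + k − 1)/(k(k − 1))` for `t ≥ 0`, `ψ(t) = +∞` for `t < 0`.
Then `ψ*(s) = (1/k)((max((k − 1)s + 1, 0))^{k/(k−1)} − 1)` for all `s ∈ ℝ`. -/
theorem stmt14 (k : ℝ) (hk : 1 < k) :
    ∀ s : ℝ,
      (⨆ t : ℝ, ((s * t : ℝ) : EReal) -
          (if t < 0 then (⊤ : EReal)
           else (((t ^ k - k * t + k - 1) / (k * (k - 1)) : ℝ) : EReal)))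
        = (((1 / k) * ((max ((k - 1) * s + 1) 0) ^ (k / (k - 1)) - 1) : ℝ) : EReal) := by
  intro s
  have hpq : k.HolderConjugate (k / (k - 1)) := (Real.holderConjugate_iff_eq_conjExponent hk).2 rfl
  set a := (k - 1) * s + 1
  apply le_antisymm
  · refine iSup_le fun t => ?_
    split_ifs with ht
    · simp
    · rw [← EReal.coe_sub, EReal.coe_le_coe_iff, ← sub_nonpos, cressieRead_conj_sub_eq hk]
      exact div_nonpos_of_nonpos_of_nonneg
        (sub_nonpos.2 (Real.mul_sub_rpow_div_le hpq a (not_lt.1 ht))) hpq.sub_one_pos.le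
  · have ht : 0 ≤ max a 0 ^ (k / (k - 1) - 1) := by positivity
    refine le_iSup_of_le (max a 0 ^ (k / (k - 1) - 1)) ?_
    rw [if_neg (not_lt.2 ht), ← EReal.coe_sub, EReal.coe_le_coe_iff, ← sub_nonneg,
      cressieRead_conj_sub_eq hk, Real.mul_rpow_sub_one_sub_rpow_div hpq, sub_self, zero_div]
end

section
/- One-step recursion of the STORM-type function-value estimator (deterministic averaged form of Lemma 13): Let g₁,…,gₙ: ℝ^m → ℝ^p each be L_g-Lipschitz, let ḡ = (1/n) Σᵢ gᵢ, and fix w, w' ∈ ℝ^m, s ∈ ℝ^p, β ∈ [0, 1], and σ ≥ 0 such that (1/n) Σᵢ ‖gᵢ(w') − ḡ(w')‖² ≤ σ². Then (1/n) Σᵢ ‖gᵢ(w') + (1 − β)(s − gᵢ(w)) − ḡ(w')‖² ≤ (1 − β)² ‖s − ḡ(w)‖² + 2β² σ² + 2(1 − β)² L_g² ‖w' − w‖². -/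
set_option maxHeartbeats 1000000

open Finset RealInnerProductSpace



/-- One-step recursion of the STORM-type function-value estimator (deterministic averaged form
of Lemma 13): if each `gᵢ : ℝ^m → ℝ^p` is `L_g`-Lipschitz, `ḡ = (1/n) ∑ᵢ gᵢ`, `β ∈ [0,1]`,
and `(1/n) ∑ᵢ ‖gᵢ(w') − ḡ(w')‖² ≤ σ²`, then
`(1/n) ∑ᵢ ‖gᵢ(w') + (1 − β)(s − gᵢ(w)) − ḡ(w')‖²
  ≤ (1 − β)²‖s − ḡ(w)‖² + 2β²σ² + 2(1 − β)² L_g² ‖w' − w‖²`. -/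
theorem stmt18
    {m p n : ℕ} (hn : 0 < n) (Lg σ β : ℝ) (hσ : 0 ≤ σ) (hβ0 : 0 ≤ β) (hβ1 : β ≤ 1)
    (g : Fin n → EuclideanSpace ℝ (Fin m) → EuclideanSpace ℝ (Fin p))
    (hlip : ∀ i a b, ‖g i a - g i b‖ ≤ Lg * ‖a - b‖)
    (w w' : EuclideanSpace ℝ (Fin m)) (s : EuclideanSpace ℝ (Fin p))
    (hvar : (1 / (n : ℝ)) * ∑ i, ‖g i w' - (1 / (n : ℝ)) • ∑ j, g j w'‖ ^ 2 ≤ σ ^ 2) :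
    (1 / (n : ℝ)) * ∑ i,
        ‖g i w' + (1 - β) • (s - g i w) - (1 / (n : ℝ)) • ∑ j, g j w'‖ ^ 2
      ≤ (1 - β) ^ 2 * ‖s - (1 / (n : ℝ)) • ∑ j, g j w‖ ^ 2
        + 2 * β ^ 2 * σ ^ 2 + 2 * (1 - β) ^ 2 * Lg ^ 2 * ‖w' - w‖ ^ 2 := by
  have hn' : (n : ℝ) ≠ 0 := Nat.cast_ne_zero.mpr hn.ne'
  have hnpos : (0:ℝ) < n := by positivity
  set Gw' : EuclideanSpace ℝ (Fin p) := (1 / (n : ℝ)) • ∑ j, g j w' with hGw'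
  set Gw : EuclideanSpace ℝ (Fin p) := (1 / (n : ℝ)) • ∑ j, g j w with hGw
  set a : EuclideanSpace ℝ (Fin p) := (1 - β) • (s - Gw) with ha
  set e : Fin n → EuclideanSpace ℝ (Fin p) := fun i => g i w' - Gw' with he
  set v : Fin n → EuclideanSpace ℝ (Fin p) := fun i => g i w' - g i w with hv
  set vb : EuclideanSpace ℝ (Fin p) := Gw' - Gw with hvb
  set d : Fin n → EuclideanSpace ℝ (Fin p) := fun i => v i - vb with hd
  set u : Fin n → EuclideanSpace ℝ (Fin p) := fun i => β • e i + (1 - β) • d i with hu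
  -- sums
  have hsumw' : ∑ j, g j w' = (n : ℝ) • Gw' := by
    rw [hGw', smul_smul, mul_one_div, div_self hn', one_smul]
  have hsumw : ∑ j, g j w = (n : ℝ) • Gw := by
    rw [hGw, smul_smul, mul_one_div, div_self hn', one_smul]
  have hsume : ∑ i, e i = 0 := by
    simp only [he, Finset.sum_sub_distrib, hsumw', Finset.sum_const, card_univ,
      Fintype.card_fin, ← Nat.cast_smul_eq_nsmul ℝ, sub_self]
  have hsumv : ∑ i, v i = (n : ℝ) • vb := by
    simp only [hv, hvb, Finset.sum_sub_distrib, hsumw', hsumw, smul_sub]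
  have hsumd : ∑ i, d i = 0 := by
    simp only [hd, Finset.sum_sub_distrib, hsumv, Finset.sum_const, card_univ,
      Fintype.card_fin, ← Nat.cast_smul_eq_nsmul ℝ, hvb, smul_sub, sub_self]
  have hsumu : ∑ i, u i = 0 := by
    simp only [hu, Finset.sum_add_distrib, ← Finset.smul_sum, hsume, hsumd, smul_zero, add_zero]
  -- rewrite each summand
  have hrw : ∀ i, g i w' + (1 - β) • (s - g i w) - Gw' = a + u i := by
    intro i
    simp only [ha, hu, he, hd, hv, hvb]
    module
  -- expand sum of squares
  have hexp : ∑ i, ‖g i w' + (1 - β) • (s - g i w) - Gw'‖ ^ 2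
      = (n : ℝ) * ‖a‖ ^ 2 + ∑ i, ‖u i‖ ^ 2 := by
    have : ∀ i, ‖g i w' + (1 - β) • (s - g i w) - Gw'‖ ^ 2
        = ‖a‖ ^ 2 + 2 * ⟪a, u i⟫ + ‖u i‖ ^ 2 := by
      intro i; rw [hrw i, @norm_add_sq_real]
    simp only [this, Finset.sum_add_distrib, Finset.sum_const, card_univ, Fintype.card_fin,
      nsmul_eq_mul, ← Finset.mul_sum, ← inner_sum, hsumu, inner_zero_right, mul_zero, add_zero]
  -- bound each ‖u i‖²
  have hub : ∀ i, ‖u i‖ ^ 2 ≤ 2 * β ^ 2 * ‖e i‖ ^ 2 + 2 * (1 - β) ^ 2 * ‖d i‖ ^ 2 := by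
    intro i
    have h1 : ‖u i‖ ≤ β * ‖e i‖ + (1 - β) * ‖d i‖ := by
      calc ‖u i‖ ≤ ‖β • e i‖ + ‖(1 - β) • d i‖ := norm_add_le _ _
        _ = β * ‖e i‖ + (1 - β) * ‖d i‖ := by
            rw [norm_smul, norm_smul, Real.norm_eq_abs, Real.norm_eq_abs,
              abs_of_nonneg hβ0, abs_of_nonneg (by linarith)]
    nlinarith [norm_nonneg (u i), norm_nonneg (e i), norm_nonneg (d i),
      sq_nonneg (β * ‖e i‖ - (1 - β) * ‖d i‖)]
  -- variance bound for d
  have hdvar : ∑ i, ‖d i‖ ^ 2 ≤ ∑ i, ‖v i‖ ^ 2 := by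
    have : ∀ i, ‖d i‖ ^ 2 = ‖v i‖ ^ 2 - 2 * ⟪v i, vb⟫ + ‖vb‖ ^ 2 := by
      intro i; rw [hd, @norm_sub_sq_real]
    rw [Finset.sum_congr rfl fun i _ => this i]
    have hin : ∑ i, ⟪v i, vb⟫ = (n : ℝ) * ‖vb‖ ^ 2 := by
      rw [← sum_inner, hsumv, real_inner_smul_left, real_inner_self_eq_norm_sq]
    have hnn : 0 ≤ (n : ℝ) * ‖vb‖ ^ 2 := by positivity
    simp only [Finset.sum_add_distrib, Finset.sum_sub_distrib, ← Finset.mul_sum, hin,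
      Finset.sum_const, card_univ, Fintype.card_fin, nsmul_eq_mul]
    linarith [hnn]
  have hvlip : ∑ i, ‖v i‖ ^ 2 ≤ (n : ℝ) * (Lg ^ 2 * ‖w' - w‖ ^ 2) := by
    have : ∀ i, ‖v i‖ ^ 2 ≤ Lg ^ 2 * ‖w' - w‖ ^ 2 := by
      intro i
      have := hlip i w' w
      nlinarith [norm_nonneg (v i)]
    calc ∑ i, ‖v i‖ ^ 2 ≤ ∑ _i : Fin n, Lg ^ 2 * ‖w' - w‖ ^ 2 :=
          Finset.sum_le_sum fun i _ => this i
      _ = (n : ℝ) * (Lg ^ 2 * ‖w' - w‖ ^ 2) := by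
          simp [Finset.sum_const, card_univ, mul_comm]
  -- combine
  have hesum : (1 / (n : ℝ)) * ∑ i, ‖e i‖ ^ 2 ≤ σ ^ 2 := hvar
  have husum : ∑ i, ‖u i‖ ^ 2 ≤ 2 * β ^ 2 * ∑ i, ‖e i‖ ^ 2
      + 2 * (1 - β) ^ 2 * ∑ i, ‖d i‖ ^ 2 := by
    calc ∑ i, ‖u i‖ ^ 2 ≤ ∑ i, (2 * β ^ 2 * ‖e i‖ ^ 2 + 2 * (1 - β) ^ 2 * ‖d i‖ ^ 2) :=
          Finset.sum_le_sum fun i _ => hub i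
      _ = _ := by rw [Finset.sum_add_distrib, Finset.mul_sum, Finset.mul_sum]
  have hna : ‖a‖ ^ 2 = (1 - β) ^ 2 * ‖s - Gw‖ ^ 2 := by
    rw [ha, norm_smul, Real.norm_eq_abs, abs_of_nonneg (by linarith : (0:ℝ) ≤ 1 - β),
      mul_pow]
  rw [hexp, hna]
  have hsum_e_nn : (0:ℝ) ≤ ∑ i, ‖e i‖ ^ 2 := Finset.sum_nonneg fun i _ => by positivity
  have hse : ∑ i, ‖e i‖ ^ 2 ≤ (n : ℝ) * σ ^ 2 := by
    rw [one_div, inv_mul_le_iff₀ hnpos] at hesum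
    linarith [hesum]
  have hsd : ∑ i, ‖d i‖ ^ 2 ≤ (n : ℝ) * (Lg ^ 2 * ‖w' - w‖ ^ 2) := le_trans hdvar hvlip
  have hβ2 : (0:ℝ) ≤ 2 * β ^ 2 := by positivity
  have hβ2' : (0:ℝ) ≤ 2 * (1 - β) ^ 2 := by positivity
  have hfin : ∑ i, ‖u i‖ ^ 2 ≤ (n : ℝ) * (2 * β ^ 2 * σ ^ 2
      + 2 * (1 - β) ^ 2 * Lg ^ 2 * ‖w' - w‖ ^ 2) := by
    have h1 := mul_le_mul_of_nonneg_left hse hβ2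
    have h2 := mul_le_mul_of_nonneg_left hsd hβ2'
    calc ∑ i, ‖u i‖ ^ 2 ≤ _ := husum
      _ ≤ _ := by nlinarith
  rw [mul_add, mul_comm ((1:ℝ)/n)]
  have : (1 / (n : ℝ)) * ∑ i, ‖u i‖ ^ 2 ≤ 2 * β ^ 2 * σ ^ 2
      + 2 * (1 - β) ^ 2 * Lg ^ 2 * ‖w' - w‖ ^ 2 := by
    rw [one_div, inv_mul_le_iff₀ hnpos]
    linarith [hfin]
  have hone : (n : ℝ) * ((1 - β) ^ 2 * ‖s - Gw‖ ^ 2) * (1 / n)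
      = (1 - β) ^ 2 * ‖s - Gw‖ ^ 2 := by
    field_simp
  linarith [this]
end

section
/- Compositional gradient-error bound (core inequality of the Lemma bounding ‖z_t − ∇F(w_t)‖ for DP Recursive-SPIDER): Let g: ℝ^{d+1} → ℝ be differentiable with ‖∇g(w)‖ ≤ L_g for all w, and let f: ℝ → ℝ be differentiable with |f'(t)| ≤ L_f for all t and with f' being L_{∇f}-Lipschitz; fix ρ ∈ ℝ. Writing w = (x, λ) ∈ ℝ^d × ℝ and ∇g(w) = (∇_x g(w), ∂_λ g(w)), define the exact gradient vector G(w) = (f'(g(w)) ∇_x g(w), f'(g(w)) ∂_λ g(w) + log g(w) + ρ) ∈ ℝ^{d+1}, and for estimates s ∈ ℝ, v ∈ ℝ^d, u ∈ ℝ define z = (f'(s) v, f'(s) u + log s + ρ) ∈ ℝ^{d+1}. If s ≥ 1 and g(w) ≥ 1, then ‖z − G(w)‖² ≤ (4 L_g² L_{∇f}² + 2)(s − g(w))² + 4 L_f² (‖v − ∇_x g(w)‖² + (u − ∂_λ g(w))²). -/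
lemma log_sub_le_sub {a b : ℝ} (ha : 1 ≤ a) (hab : a ≤ b) :
    Real.log b - Real.log a ≤ b - a := by
  have ha0 : 0 < a := lt_of_lt_of_le one_pos ha
  have hb0 : 0 < b := lt_of_lt_of_le ha0 hab
  have h1 : Real.log b - Real.log a = Real.log (b / a) := (Real.log_div hb0.ne' ha0.ne').symm
  have h2 : Real.log (b / a) ≤ b / a - 1 :=
    Real.log_le_sub_one_of_pos (div_pos hb0 ha0)
  have h3 : b / a - 1 = (b - a) / a := by field_simp
  have h4 : (b - a) / a ≤ b - a := div_le_self (by linarith) ha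
  linarith

lemma abs_log_sub_le {a b : ℝ} (ha : 1 ≤ a) (hb : 1 ≤ b) :
    |Real.log a - Real.log b| ≤ |a - b| := by
  rcases le_total a b with h | h
  · rw [abs_sub_comm, abs_sub_comm a b]
    rw [abs_of_nonneg (by linarith [Real.log_le_log (by linarith : (0:ℝ) < a) h] :
      0 ≤ Real.log b - Real.log a), abs_of_nonneg (by linarith : 0 ≤ b - a)]
    exact log_sub_le_sub ha h
  · rw [abs_of_nonneg (by linarith [Real.log_le_log (by linarith : (0:ℝ) < b) h] :
      0 ≤ Real.log a - Real.log b), abs_of_nonneg (by linarith : 0 ≤ a - b)]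
    exact log_sub_le_sub hb h

set_option maxHeartbeats 1000000 in
/-- Compositional gradient-error bound (core inequality of the Lemma bounding
`‖z_t − ∇F(w_t)‖` for DP Recursive-SPIDER): with `w = (x, λ) ∈ ℝ^d × ℝ` (given the ℓ²
product structure via `WithLp 2`), `g : ℝ^{d+1} → ℝ` differentiable with `‖∇g(w)‖ ≤ L_g`,
`f : ℝ → ℝ` differentiable with `|f'| ≤ L_f` and `L_{∇f}`-Lipschitz derivative, exact gradient
`G(w) = (f'(g(w)) ∇ₓg(w), f'(g(w)) ∂_λ g(w) + log g(w) + ρ)` and estimator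
`z = (f'(s) v, f'(s) u + log s + ρ)`, if `s ≥ 1` and `g(w) ≥ 1` then
`‖z − G(w)‖² ≤ (4L_g²L_{∇f}² + 2)(s − g(w))² + 4L_f²(‖v − ∇ₓg(w)‖² + (u − ∂_λ g(w))²)`. -/
theorem stmt19
    {d : ℕ} (Lg Lf Lnf ρ : ℝ)
    (g : WithLp 2 (EuclideanSpace ℝ (Fin d) × ℝ) → ℝ)
    (hgdiff : Differentiable ℝ g)
    (hgbound : ∀ w, ‖gradient g w‖ ≤ Lg)
    (f : ℝ → ℝ) (hfdiff : Differentiable ℝ f)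
    (hfbound : ∀ t, |deriv f t| ≤ Lf)
    (hflip : ∀ a b, |deriv f a - deriv f b| ≤ Lnf * |a - b|)
    (w : WithLp 2 (EuclideanSpace ℝ (Fin d) × ℝ))
    (s u : ℝ) (v : EuclideanSpace ℝ (Fin d))
    (hs : 1 ≤ s) (hgw : 1 ≤ g w) :
    ‖(WithLp.equiv 2 (EuclideanSpace ℝ (Fin d) × ℝ)).symm
        (deriv f s • v
            - deriv f (g w) • (WithLp.equiv 2 (EuclideanSpace ℝ (Fin d) × ℝ) (gradient g w)).1,
         (deriv f s * u + Real.log s + ρ)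
            - (deriv f (g w) * (WithLp.equiv 2 (EuclideanSpace ℝ (Fin d) × ℝ) (gradient g w)).2
                + Real.log (g w) + ρ))‖ ^ 2
      ≤ (4 * Lg ^ 2 * Lnf ^ 2 + 2) * (s - g w) ^ 2
        + 4 * Lf ^ 2 *
            (‖v - (WithLp.equiv 2 (EuclideanSpace ℝ (Fin d) × ℝ) (gradient g w)).1‖ ^ 2
              + (u - (WithLp.equiv 2 (EuclideanSpace ℝ (Fin d) × ℝ) (gradient g w)).2) ^ 2) := by
  set a := deriv f s with ha_def
  set b := deriv f (g w) with hb_def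
  set vg := (WithLp.equiv 2 (EuclideanSpace ℝ (Fin d) × ℝ) (gradient g w)).1 with hvg_def
  set ug := (WithLp.equiv 2 (EuclideanSpace ℝ (Fin d) × ℝ) (gradient g w)).2 with hug_def
  -- decompose the norm of the L2 product
  rw [WithLp.prod_norm_sq_eq_of_L2]
  rw [WithLp.equiv_symm_apply, WithLp.toLp_fst, WithLp.toLp_snd]
  dsimp only
  rw [Real.norm_eq_abs, sq_abs]
  -- scalar facts
  have hG : ‖gradient g w‖ ^ 2 = ‖vg‖ ^ 2 + ug ^ 2 := by
    rw [WithLp.prod_norm_sq_eq_of_L2]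
    simp [hvg_def, hug_def, WithLp.equiv_apply, WithLp.ofLp_fst, WithLp.ofLp_snd, sq_abs, Real.norm_eq_abs]
  have hGle : ‖vg‖ ^ 2 + ug ^ 2 ≤ Lg ^ 2 := by
    rw [← hG]
    have h1 := hgbound w
    have h0 : (0:ℝ) ≤ ‖gradient g w‖ := norm_nonneg _
    nlinarith
  have ha2 : a ^ 2 ≤ Lf ^ 2 := by
    have h1 := hfbound s
    have h0 : (0:ℝ) ≤ |a| := abs_nonneg a
    nlinarith [sq_abs a]
  have hab2 : (a - b) ^ 2 ≤ Lnf ^ 2 * (s - g w) ^ 2 := by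
    have h1 := hflip s (g w)
    have h0 : (0:ℝ) ≤ |a - b| := abs_nonneg _
    nlinarith [sq_abs (a - b), sq_abs (s - g w)]
  have hD2 : (Real.log s - Real.log (g w)) ^ 2 ≤ (s - g w) ^ 2 := by
    have h1 := abs_log_sub_le hs hgw
    have h0 : (0:ℝ) ≤ |Real.log s - Real.log (g w)| := abs_nonneg _
    nlinarith [sq_abs (Real.log s - Real.log (g w)), sq_abs (s - g w)]
  -- first component bound
  have hfirst : ‖a • v - b • vg‖ ^ 2
      ≤ 2 * a ^ 2 * ‖v - vg‖ ^ 2 + 2 * (a - b) ^ 2 * ‖vg‖ ^ 2 := by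
    have hdec : a • v - b • vg = a • (v - vg) + (a - b) • vg := by
      rw [smul_sub, sub_smul]; abel
    have htri : ‖a • v - b • vg‖ ≤ ‖a • (v - vg)‖ + ‖(a - b) • vg‖ := by
      rw [hdec]; exact norm_add_le _ _
    have h1 : ‖a • (v - vg)‖ = |a| * ‖v - vg‖ := by rw [norm_smul, Real.norm_eq_abs]
    have h2 : ‖(a - b) • vg‖ = |a - b| * ‖vg‖ := by rw [norm_smul, Real.norm_eq_abs]
    have h0 : (0:ℝ) ≤ ‖a • v - b • vg‖ := norm_nonneg _
    nlinarith [sq_abs a, sq_abs (a - b), sq_nonneg (|a| * ‖v - vg‖ - |a - b| * ‖vg‖),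
      norm_nonneg (a • v - b • vg)]
  -- second component bound
  have hsecond : ((a * u + Real.log s + ρ) - (b * ug + Real.log (g w) + ρ)) ^ 2
      ≤ 4 * a ^ 2 * (u - ug) ^ 2 + 4 * (a - b) ^ 2 * ug ^ 2
        + 2 * (Real.log s - Real.log (g w)) ^ 2 := by
    have hdec : (a * u + Real.log s + ρ) - (b * ug + Real.log (g w) + ρ)
        = a * (u - ug) + (a - b) * ug + (Real.log s - Real.log (g w)) := by ring
    rw [hdec]
    nlinarith [sq_nonneg (a * (u - ug) - (a - b) * ug),
      sq_nonneg (a * (u - ug) + (a - b) * ug - (Real.log s - Real.log (g w))),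
      sq_nonneg (a * (u - ug)), sq_nonneg ((a - b) * ug)]
  -- combine
  have hn1 : (0:ℝ) ≤ ‖v - vg‖ ^ 2 := sq_nonneg _
  have hn2 : (0:ℝ) ≤ (u - ug) ^ 2 := sq_nonneg _
  have hvg2 : (0:ℝ) ≤ ‖vg‖ ^ 2 := sq_nonneg _
  have hug2 : (0:ℝ) ≤ ug ^ 2 := sq_nonneg _
  have hS2 : (0:ℝ) ≤ (s - g w) ^ 2 := sq_nonneg _
  have habnn : (0:ℝ) ≤ Lnf ^ 2 * (s - g w) ^ 2 := le_trans (sq_nonneg _) hab2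
  nlinarith [mul_nonneg (sub_nonneg.2 ha2) hn1, mul_nonneg (sub_nonneg.2 ha2) hn2,
    mul_nonneg (sub_nonneg.2 hab2) (add_nonneg hvg2 hug2),
    mul_nonneg (sub_nonneg.2 hGle) habnn]
end
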